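/- arXiv:2212.13605 — 3 statements merged into one kernel-verified Lean document; each statement's English description precedes it below -/
import Mathlib

section
/- Let T be a complete first-order theory with infinite models in a countable language L, let M be an ℵ₁-saturated model of T, and let p ∈ S₁(T) be a simple type, witnessed by C and (D,<). Let S denote the successor function of (p(M),<) and cl(b) = {Sⁿ(b) : n ∈ ℤ}. If a, b ∈ p(M) satisfy a < Sⁿ(b) for all n ∈ ℤ, then the complete type tp(a/b) of a over {b} is a C-type: every formula in tp(a/b) is satisfied by infinitely many elements of C. -/
open FirstOrder FirstOrder.Language Set Cardinal

universe u v w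

namespace PaperDef

variable {L : FirstOrder.Language.{u, v}}

/-- Valuation assigning parameters from `A` their own values and the
`n` free variables the values given by the tuple `x`. -/
def pval {M : Type w} {A : Set M} {n : ℕ} (x : Fin n → M) : ↥A ⊕ Fin n → M :=
  Sum.elim Subtype.val x

variable {M : Type w} [L.Structure M]

/-- The subset of `M` defined by an `L(A)`-formula in one free variable. -/
def defSet (A : Set M) (δ : L.Formula (↥A ⊕ Fin 1)) : Set M :=
  {a | δ.Realize (pval ![a])}

/-- The binary relation on `M` defined by an `L(A)`-formula in two free variables. -/
def defRel (A : Set M) (φ : L.Formula (↥A ⊕ Fin 2)) : M → M → Prop :=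
  fun a b => φ.Realize (pval ![a, b])

/-- The relation defined by `φ`, guarded so as to only hold on the set defined by `δ`
(the paper's convention of writing `x < y` for `x ∈ D ∧ y ∈ D ∧ x < y`). -/
def gRel (A : Set M) (δ : L.Formula (↥A ⊕ Fin 1)) (φ : L.Formula (↥A ⊕ Fin 2)) :
    M → M → Prop :=
  fun a b => a ∈ defSet A δ ∧ b ∈ defSet A δ ∧ defRel A φ a b

/-- The set of realizations in `M` of a set of `L(A)`-formulas in one free variable. -/
def typeSet (A : Set M) (p : Set (L.Formula (↥A ⊕ Fin 1))) : Set M :=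
  {a | ∀ φ ∈ p, φ.Realize (pval ![a])}

/-- A set of `L(A)`-formulas in `n` free variables is finitely satisfiable in `M`. -/
def FinSat (A : Set M) {n : ℕ} (p : Set (L.Formula (↥A ⊕ Fin n))) : Prop :=
  ∀ s : Finset (L.Formula (↥A ⊕ Fin n)), ↑s ⊆ p →
    ∃ x : Fin n → M, ∀ φ ∈ s, Formula.Realize φ (pval x)

/-- A complete `n`-type over `A` (relative to the complete theory of `M` with
parameters in `A`): a maximal finitely satisfiable set of formulas. -/
def IsCompleteType (A : Set M) {n : ℕ} (p : Set (L.Formula (↥A ⊕ Fin n))) : Prop :=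
  FinSat A p ∧ ∀ φ : L.Formula (↥A ⊕ Fin n), φ ∈ p ∨ BoundedFormula.not φ ∈ p

/-- `M` is ℵ₀-saturated: every finitely satisfiable set of formulas in one free
variable with parameters from a finite subset of `M` is realized in `M`. -/
def IsAleph0Saturated (L : FirstOrder.Language.{u, v}) (M : Type w) [L.Structure M] : Prop :=
  ∀ A : Set M, A.Finite → ∀ p : Set (L.Formula (↥A ⊕ Fin 1)),
    FinSat A p → (typeSet A p).Nonempty

/-- `M` is ℵ₁-saturated: every finitely satisfiable set of formulas in one free
variable with parameters from a countable subset of `M` is realized in `M`. -/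
def IsAleph1Saturated (L : FirstOrder.Language.{u, v}) (M : Type w) [L.Structure M] : Prop :=
  ∀ A : Set M, A.Countable → ∀ p : Set (L.Formula (↥A ⊕ Fin 1)),
    FinSat A p → (typeSet A p).Nonempty

/-- The definable closure of `A` in `M`. -/
def dclSet (L : FirstOrder.Language.{u, v}) {M : Type w} [L.Structure M] (A : Set M) : Set M :=
  {a | ∃ φ : L.Formula (↥A ⊕ Fin 1),
    φ.Realize (pval ![a]) ∧ ∀ b : M, φ.Realize (pval ![b]) → b = a}

/-- `r` is a (strict) linear order on the set `D`. -/
def IsLinearOn {X : Type*} (r : X → X → Prop) (D : Set X) : Prop :=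
  (∀ a ∈ D, ¬r a a) ∧
  (∀ a ∈ D, ∀ b ∈ D, ∀ c ∈ D, r a b → r b c → r a c) ∧
  (∀ a ∈ D, ∀ b ∈ D, a = b ∨ r a b ∨ r b a)

/-- The linear order `r` on `D` is discrete: every element other than the maximum
has an immediate successor and every element other than the minimum has an
immediate predecessor. -/
def IsDiscreteOn {X : Type*} (r : X → X → Prop) (D : Set X) : Prop :=
  (∀ a ∈ D, (∃ b ∈ D, r a b) → ∃ b ∈ D, r a b ∧ ∀ c ∈ D, r a c → c = b ∨ r b c) ∧
  (∀ a ∈ D, (∃ b ∈ D, r b a) → ∃ b ∈ D, r b a ∧ ∀ c ∈ D, r c a → c = b ∨ r c b)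

/-- `C` is an initial part of the order `(D, r)`. -/
def IsInitialPart {X : Type*} (r : X → X → Prop) (D C : Set X) : Prop :=
  C ⊆ D ∧ ∀ c ∈ C, ∀ d ∈ D, r d c → d ∈ C

/-- `(C, r)` has order type ω: `C` is infinite and every element has only
finitely many predecessors in `C`. -/
def HasOrderTypeOmega {X : Type*} (r : X → X → Prop) (C : Set X) : Prop :=
  C.Infinite ∧ ∀ c ∈ C, {c' ∈ C | r c' c}.Finite

/-- `p` is a simple type over `A`, witnessed by `C ⊆ dcl(A)` and the `A`-definable
linear order `(D, <)` given by the formulas `δ` (defining `D`) and `lt` (defining `<`). -/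
def IsSimpleWitness (A : Set M) (p : Set (L.Formula (↥A ⊕ Fin 1))) (C : Set M)
    (δ : L.Formula (↥A ⊕ Fin 1)) (lt : L.Formula (↥A ⊕ Fin 2)) : Prop :=
  IsCompleteType A p ∧
  C.Infinite ∧
  C ⊆ dclSet L A ∧
  IsLinearOn (gRel A δ lt) (defSet A δ) ∧
  IsInitialPart (gRel A δ lt) (defSet A δ) C ∧
  HasOrderTypeOmega (gRel A δ lt) C ∧
  ∀ φ : L.Formula (↥A ⊕ Fin 1),
    φ ∈ p ↔ {c ∈ C | ¬φ.Realize (pval ![c])}.Finite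

/-- `b` is the immediate successor of `a` in the order `(P, r)`. -/
def SuccIn {X : Type*} (r : X → X → Prop) (P : Set X) (a b : X) : Prop :=
  a ∈ P ∧ b ∈ P ∧ r a b ∧ ∀ c ∈ P, r a c → c = b ∨ r b c

/-- `zIter S k a b` says that `b = Sᵏ(a)`, where negative iterates of `S` are
interpreted via the (partial) inverse of `S`. -/
def zIter {X : Type*} (S : X → X) (k : ℤ) (a b : X) : Prop :=
  if 0 ≤ k then S^[k.toNat] a = b else S^[(-k).toNat] b = a

/-- Isomorphism as an equivalence relation on countably infinite models of `T`
(with underlying set in `Type 0`). -/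
def countableModelSetoid (T : L.Theory) :
    Setoid {N : Theory.ModelType.{u, v, 0} T // Countable N ∧ Infinite N} where
  r N₁ N₂ := Nonempty (N₁.1 ≃[L] N₂.1)
  iseqv := ⟨fun N => ⟨FirstOrder.Language.Equiv.refl L N.1⟩,
    fun e => e.map FirstOrder.Language.Equiv.symm,
    fun e f => Nonempty.map2 (fun i j => j.comp i) e f⟩

/-- The number of countably infinite models of `T` up to isomorphism. -/
noncomputable def numCountableModels (T : L.Theory) : Cardinal :=
  #(Quotient (countableModelSetoid T))

-- ========== auxiliary combinatorics of the order ==========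

/-- `gapRel r n x y` says that there is an `r`-chain of `n` points strictly
between `x` and `y`. -/
def gapRel {X : Type*} (r : X → X → Prop) : ℕ → X → X → Prop
  | 0 => r
  | n + 1 => fun x y => ∃ z, r x z ∧ gapRel r n z y

/-- Bundled order-theoretic context: `r` is a strict linear order on `D` and
`C ⊆ D` is an infinite initial part of order type `ω`. -/
structure OrdCtx {X : Type*} (r : X → X → Prop) (D C : Set X) : Prop where
  mem : ∀ {x y}, r x y → x ∈ D ∧ y ∈ D
  irrefl' : ∀ a ∈ D, ¬ r a a
  trans' : ∀ a ∈ D, ∀ b ∈ D, ∀ c ∈ D, r a b → r b c → r a c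
  tri : ∀ a ∈ D, ∀ b ∈ D, a = b ∨ r a b ∨ r b a
  subC : C ⊆ D
  init : ∀ c ∈ C, ∀ d ∈ D, r d c → d ∈ C
  finPred : ∀ c ∈ C, {c' ∈ C | r c' c}.Finite
  infC : C.Infinite

namespace OrdCtx

variable {X : Type*} {r : X → X → Prop} {D C : Set X} (h : OrdCtx r D C)

include h

theorem nrefl {x : X} (hx : r x x) : False := h.irrefl' x (h.mem hx).1 hx

theorem rtrans {x y z : X} (hxy : r x y) (hyz : r y z) : r x z :=
  h.trans' x (h.mem hxy).1 y (h.mem hxy).2 z (h.mem hyz).2 hxy hyz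

theorem asym {x y : X} (hxy : r x y) (hyx : r y x) : False := h.nrefl (h.rtrans hxy hyx)

theorem above {F : Set X} (hFC : F ⊆ C) (hF : F.Finite) : ∃ c ∈ C, ∀ x ∈ F, r x c := by
  have hB : (F ∪ ⋃ x ∈ F, {c' ∈ C | r c' x}).Finite :=
    hF.union (hF.biUnion fun x hx => h.finPred x (hFC hx))
  obtain ⟨c, hc⟩ := (h.infC.diff hB).nonempty
  refine ⟨c, hc.1, fun x hx => ?_⟩
  rcases h.tri x (h.subC (hFC hx)) c (h.subC hc.1) with he | hlt | hgt
  · exact absurd (Set.mem_union_left _ (he ▸ hx)) hc.2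
  · exact hlt
  · exact absurd (Set.mem_union_right _ (Set.mem_biUnion hx
      (show c ∈ {c' | c' ∈ C ∧ r c' x} from ⟨hc.1, hgt⟩))) hc.2

theorem minOf {S : Set X} (hS : S.Finite) (hSD : S ⊆ D) (hne : S.Nonempty) :
    ∃ m ∈ S, ∀ v ∈ S, v = m ∨ r m v := by
  revert hSD hne
  refine Set.Finite.induction_on
    (motive := fun S _ => S ⊆ D → S.Nonempty → ∃ m ∈ S, ∀ v ∈ S, v = m ∨ r m v) S hS
    (fun _ hne => absurd hne (by simp)) ?_
  intro x s hxs hsfin ih hsub hne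
  rcases s.eq_empty_or_nonempty with rfl | hsne
  · refine ⟨x, Set.mem_insert _ _, fun v hv => ?_⟩
    rcases Set.mem_insert_iff.mp hv with rfl | hv'
    · exact Or.inl rfl
    · exact absurd hv' (Set.notMem_empty v)
  · obtain ⟨m, hm, hmin⟩ := ih (fun y hy => hsub (Set.mem_insert_of_mem x hy)) hsne
    have hxD : x ∈ D := hsub (Set.mem_insert _ _)
    have hmD : m ∈ D := hsub (Set.mem_insert_of_mem _ hm)
    rcases h.tri x hxD m hmD with he | hlt | hgt
    · refine ⟨m, Set.mem_insert_of_mem _ hm, fun v hv => ?_⟩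
      rcases Set.mem_insert_iff.mp hv with rfl | hv'
      · exact Or.inl he
      · exact hmin v hv'
    · refine ⟨x, Set.mem_insert _ _, fun v hv => ?_⟩
      rcases Set.mem_insert_iff.mp hv with rfl | hv'
      · exact Or.inl rfl
      · rcases hmin v hv' with rfl | hmv
        · exact Or.inr hlt
        · exact Or.inr (h.rtrans hlt hmv)
    · refine ⟨m, Set.mem_insert_of_mem _ hm, fun v hv => ?_⟩
      rcases Set.mem_insert_iff.mp hv with rfl | hv'
      · exact Or.inr hgt
      · exact hmin v hv'

theorem next {c : X} (hc : c ∈ C) :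
    ∃ z ∈ C, r c z ∧ ∀ w, ¬ (r c w ∧ r w z) := by
  have hfin : (({c} : Set X) ∪ {c' ∈ C | r c' c}).Finite :=
    (Set.finite_singleton c).union (h.finPred c hc)
  obtain ⟨c₁, hc₁⟩ := (h.infC.diff hfin).nonempty
  have hc₁C : c₁ ∈ C := hc₁.1
  have hcc₁ : r c c₁ := by
    rcases h.tri c (h.subC hc) c₁ (h.subC hc₁C) with he | hlt | hgt
    · exact absurd (Set.mem_union_left _ (by simp [← he])) hc₁.2
    · exact hlt
    · exact absurd (Set.mem_union_right _ (show c₁ ∈ {c' | c' ∈ C ∧ r c' c} from ⟨hc₁C, hgt⟩)) hc₁.2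
  have hVfin : {v ∈ C | r c v ∧ (v = c₁ ∨ r v c₁)}.Finite := by
    refine ((h.finPred c₁ hc₁C).union (Set.finite_singleton c₁)).subset ?_
    rintro v ⟨hvC, _, (rfl | hvc₁)⟩
    · exact Or.inr rfl
    · exact Or.inl ⟨hvC, hvc₁⟩
  obtain ⟨m, hm, hmin⟩ := h.minOf hVfin (fun v hv => h.subC hv.1) ⟨c₁, hc₁C, hcc₁, Or.inl rfl⟩
  refine ⟨m, hm.1, hm.2.1, fun w hw => ?_⟩
  have hwD : w ∈ D := (h.mem hw.1).2
  have hwC : w ∈ C := h.init m hm.1 w hwD hw.2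
  have hwc₁ : w = c₁ ∨ r w c₁ := by
    rcases hm.2.2 with rfl | hmc₁
    · exact Or.inr hw.2
    · exact Or.inr (h.rtrans hw.2 hmc₁)
  rcases hmin w ⟨hwC, hw.1, hwc₁⟩ with rfl | hmw
  · exact h.nrefl hw.2
  · exact h.asym hmw hw.2

theorem succ_unique {c z z' : X} (h1 : r c z) (h2 : ∀ w, ¬ (r c w ∧ r w z))
    (h3 : r c z') (h4 : ∀ w, ¬ (r c w ∧ r w z')) : z = z' := by
  rcases h.tri z (h.mem h1).2 z' (h.mem h3).2 with he | hlt | hgt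
  · exact he
  · exact absurd ⟨h1, hlt⟩ (h4 z)
  · exact absurd ⟨h3, hgt⟩ (h2 z')

theorem gap_lt {n : ℕ} : ∀ {x y : X}, gapRel r n x y → r x y := by
  induction n with
  | zero => exact fun hxy => hxy
  | succ n ih =>
    rintro x y ⟨z, hxz, hzy⟩
    exact h.rtrans hxz (ih hzy)

theorem gap_count {n : ℕ} : ∀ {x y : X}, gapRel r n x y → y ∈ C →
    ∃ T : Finset X, T.card = n ∧ ∀ t ∈ T, t ∈ C ∧ r x t ∧ r t y := by
  classical
  induction n with
  | zero => exact fun _ _ => ⟨∅, rfl, by simp⟩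
  | succ n ih =>
    rintro x y ⟨z, hxz, hzy⟩ hyC
    obtain ⟨T, hTcard, hT⟩ := ih hzy hyC
    have hzy' : r z y := h.gap_lt hzy
    have hzC : z ∈ C := h.init y hyC z (h.mem hxz).2 hzy'
    have hzT : z ∉ T := fun hzT => h.nrefl (hT z hzT).2.1
    refine ⟨insert z T, by rw [Finset.card_insert_of_notMem hzT, hTcard], ?_⟩
    intro t ht
    rcases Finset.mem_insert.mp ht with rfl | htT
    · exact ⟨hzC, hxz, hzy'⟩
    · exact ⟨(hT t htT).1, h.rtrans hxz (hT t htT).2.1, (hT t htT).2.2⟩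

end OrdCtx

/-- The number of predecessors of `c` in `C`. -/
noncomputable def posIn {X : Type*} (r : X → X → Prop) (C : Set X) (c : X) : ℕ :=
  {c' ∈ C | r c' c}.ncard

namespace OrdCtx

variable {X : Type*} {r : X → X → Prop} {D C : Set X} (h : OrdCtx r D C)

include h

theorem pos_lt {x y : X} (hx : x ∈ C) (hy : y ∈ C) (hxy : r x y) :
    posIn r C x < posIn r C y := by
  have hsub : {c' ∈ C | r c' x} ⊆ {c' ∈ C | r c' y} :=
    fun c' hc' => ⟨hc'.1, h.rtrans hc'.2 hxy⟩
  refine Set.ncard_lt_ncard ?_ (h.finPred y hy)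
  rw [Set.ssubset_iff_of_subset hsub]
  exact ⟨x, ⟨hx, hxy⟩, fun hmem => h.nrefl hmem.2⟩

theorem pos_succ {c z : X} (hc : c ∈ C) (hz : z ∈ C) (h1 : r c z)
    (h2 : ∀ w, ¬ (r c w ∧ r w z)) : posIn r C z = posIn r C c + 1 := by
  have hset : {c' ∈ C | r c' z} = insert c {c' ∈ C | r c' c} := by
    ext c'
    constructor
    · rintro ⟨hc', hlt⟩
      rcases h.tri c' (h.subC hc') c (h.subC hc) with he | hl | hg
      · exact Set.mem_insert_iff.mpr (Or.inl he)
      · exact Set.mem_insert_iff.mpr (Or.inr (show c' ∈ {c' | c' ∈ C ∧ r c' c} from ⟨hc', hl⟩))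
      · exact absurd ⟨hg, hlt⟩ (h2 c')
    · intro hmem
      rcases Set.mem_insert_iff.mp hmem with rfl | hmem'
      · exact ⟨hc, h1⟩
      · exact ⟨hmem'.1, h.rtrans hmem'.2 h1⟩
  simp only [posIn]
  rw [hset, Set.ncard_insert_of_notMem (fun hm => h.nrefl hm.2) (h.finPred c hc)]

theorem pos_gap {x y : X} (hx : x ∈ C) (hy : y ∈ C) (hxy : r x y) (T : Finset X)
    (hT : ∀ t ∈ T, t ∈ C ∧ r x t ∧ r t y) : posIn r C x + 1 + T.card ≤ posIn r C y := by
  have hsub : (↑T : Set X) ∪ insert x {c' ∈ C | r c' x} ⊆ {c' ∈ C | r c' y} := by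
    intro t ht
    rcases ht with htT | htI
    · exact ⟨(hT t htT).1, (hT t htT).2.2⟩
    · rcases Set.mem_insert_iff.mp htI with rfl | ⟨htC, htx⟩
      · exact ⟨hx, hxy⟩
      · exact ⟨htC, h.rtrans htx hxy⟩
  have hdisj : Disjoint (↑T : Set X) (insert x {c' ∈ C | r c' x}) := by
    rw [Set.disjoint_left]
    intro t htT htI
    rcases Set.mem_insert_iff.mp htI with rfl | hmem
    · exact h.nrefl (hT t htT).2.1
    · exact h.asym (hT t htT).2.1 hmem.2
  have hcard : ((↑T : Set X) ∪ insert x {c' ∈ C | r c' x}).ncard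
      = T.card + (posIn r C x + 1) := by
    rw [Set.ncard_union_eq hdisj T.finite_toSet ((h.finPred x hx).insert x),
      Set.ncard_coe_finset,
      Set.ncard_insert_of_notMem (fun hm => h.nrefl hm.2) (h.finPred x hx)]
    rfl
  calc posIn r C x + 1 + T.card
      = ((↑T : Set X) ∪ insert x {c' ∈ C | r c' x}).ncard := by rw [hcard]; omega
    _ ≤ posIn r C y := Set.ncard_le_ncard hsub (h.finPred y hy)

theorem escape {f : ℕ → X} (hfC : ∀ k, f k ∈ C) (hmono : ∀ k l, k < l → r (f k) (f l))
    {Y : Set X} (hY : Y.Finite) : ∃ k, f k ∉ Y := by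
  by_contra hall
  push_neg at hall
  have hinj : Function.Injective f := by
    intro k l hkl
    by_contra hne
    rcases Nat.lt_or_ge k l with h1 | h2
    · have := hmono k l h1
      rw [hkl] at this
      exact h.nrefl this
    · have h2' : l < k := by omega
      have := hmono l k h2'
      rw [hkl] at this
      exact h.nrefl this
  exact Set.infinite_of_injective_forall_mem hinj hall hY

theorem tailSeq {Bad : Set X} (hBad : Bad ⊆ C) (hBfin : Bad.Finite) :
    ∃ f : ℕ → X, (∀ k, f k ∈ C) ∧ (∀ k, f k ∉ Bad) ∧
      (∀ k, r (f k) (f (k + 1)) ∧ ∀ w, ¬ (r (f k) w ∧ r w (f (k + 1)))) ∧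
      (∀ k l, k < l → r (f k) (f l)) ∧
      (∀ k, posIn r C (f k) = posIn r C (f 0) + k) := by
  classical
  obtain ⟨c₁, hc₁C, hc₁⟩ := h.above hBad hBfin
  have hnext : ∀ e : {c // c ∈ C}, ∃ z : {c // c ∈ C}, r e.1 z.1 ∧ ∀ w, ¬ (r e.1 w ∧ r w z.1) := by
    intro e
    obtain ⟨z, hzC, hz1, hz2⟩ := h.next e.2
    exact ⟨⟨z, hzC⟩, hz1, hz2⟩
  choose nxt hnxt1 hnxt2 using hnext
  let g : ℕ → {c // c ∈ C} := fun k =>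
    Nat.rec (motive := fun _ => {c // c ∈ C}) ⟨c₁, hc₁C⟩ (fun _ p => nxt p) k
  have hg1 : ∀ k, r (g k).1 (g (k + 1)).1 := fun k => hnxt1 (g k)
  have hg2 : ∀ k, ∀ w, ¬ (r (g k).1 w ∧ r w (g (k + 1)).1) := fun k => hnxt2 (g k)
  have hmono : ∀ l k, k < l → r (g k).1 (g l).1 := by
    intro l
    induction l with
    | zero => intro k hk; exact absurd hk (Nat.not_lt_zero k)
    | succ l ih =>
      intro k hk
      rcases Nat.lt_or_ge k l with h1 | h2
      · exact h.rtrans (ih k h1) (hg1 l)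
      · have hkl : k = l := by omega
        subst hkl
        exact hg1 k
  refine ⟨fun k => (g k).1, fun k => (g k).2, ?_, fun k => ⟨hg1 k, hg2 k⟩,
    fun k l hkl => hmono l k hkl, ?_⟩
  · intro k hkB
    have h1 : r (g k).1 c₁ := hc₁ _ hkB
    rcases Nat.eq_zero_or_pos k with rfl | hk
    · exact h.nrefl h1
    · exact h.asym h1 (hmono k 0 hk)
  · intro k
    induction k with
    | zero => rfl
    | succ k ih =>
      rw [h.pos_succ (g k).2 (g (k + 1)).2 (hg1 k) (hg2 k), ih]
      omega

end OrdCtx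

-- ========== ∅-definable predicates ==========

/-- `P` is a ∅-definable `n`-ary predicate on `M`. -/
def IsDef (L : FirstOrder.Language.{u, v}) {M : Type w} [L.Structure M] (n : ℕ)
    (P : (Fin n → M) → Prop) : Prop :=
  ∃ θ : L.Formula (↥(∅ : Set M) ⊕ Fin n), ∀ x : Fin n → M, θ.Realize (pval x) ↔ P x

/-- `P` is a ∅-definable subset of `M`. -/
def IsDefP (L : FirstOrder.Language.{u, v}) {M : Type w} [L.Structure M] (P : M → Prop) : Prop :=
  ∃ θ : L.Formula (↥(∅ : Set M) ⊕ Fin 1), ∀ x : M, θ.Realize (pval ![x]) ↔ P x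

section Defin

variable {M : Type w} [L.Structure M]

theorem IsDef.congr {n : ℕ} {P Q : (Fin n → M) → Prop} (hP : IsDef L n P)
    (hPQ : ∀ x, P x ↔ Q x) : IsDef L n Q := by
  obtain ⟨θ, hθ⟩ := hP
  exact ⟨θ, fun x => (hθ x).trans (hPQ x)⟩

theorem IsDefP.congr {P Q : M → Prop} (hP : IsDefP L P) (hPQ : ∀ x, P x ↔ Q x) :
    IsDefP L Q := by
  obtain ⟨θ, hθ⟩ := hP
  exact ⟨θ, fun x => (hθ x).trans (hPQ x)⟩

theorem IsDef.toP {P : (Fin 1 → M) → Prop} (hP : IsDef L 1 P) :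
    IsDefP L fun x : M => P ![x] := by
  obtain ⟨θ, hθ⟩ := hP
  exact ⟨θ, fun x => hθ ![x]⟩

theorem IsDef.and {n : ℕ} {P Q : (Fin n → M) → Prop} (hP : IsDef L n P) (hQ : IsDef L n Q) :
    IsDef L n fun v => P v ∧ Q v := by
  obtain ⟨θ₁, h₁⟩ := hP
  obtain ⟨θ₂, h₂⟩ := hQ
  exact ⟨θ₁ ⊓ θ₂, fun x => by rw [Formula.realize_inf, h₁, h₂]⟩

theorem IsDef.or {n : ℕ} {P Q : (Fin n → M) → Prop} (hP : IsDef L n P) (hQ : IsDef L n Q) :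
    IsDef L n fun v => P v ∨ Q v := by
  obtain ⟨θ₁, h₁⟩ := hP
  obtain ⟨θ₂, h₂⟩ := hQ
  exact ⟨θ₁ ⊔ θ₂, fun x => by rw [Formula.realize_sup, h₁, h₂]⟩

theorem IsDef.imp {n : ℕ} {P Q : (Fin n → M) → Prop} (hP : IsDef L n P) (hQ : IsDef L n Q) :
    IsDef L n fun v => P v → Q v := by
  obtain ⟨θ₁, h₁⟩ := hP
  obtain ⟨θ₂, h₂⟩ := hQ
  exact ⟨θ₁.imp θ₂, fun x => by rw [Formula.realize_imp, h₁, h₂]⟩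

theorem IsDef.not {n : ℕ} {P : (Fin n → M) → Prop} (hP : IsDef L n P) :
    IsDef L n fun v => ¬ P v := by
  obtain ⟨θ, hθ⟩ := hP
  exact ⟨θ.not, fun x => by rw [Formula.realize_not, hθ]⟩

theorem isDef_comp {m n : ℕ} {P : (Fin m → M) → Prop} (hP : IsDef L m P) (ρ : Fin m → Fin n) :
    IsDef L n fun v => P (v ∘ ρ) := by
  obtain ⟨θ, hθ⟩ := hP
  refine ⟨θ.relabel (Sum.map id ρ), fun v => ?_⟩
  rw [Formula.realize_relabel]
  have hval : pval (A := (∅ : Set M)) v ∘ Sum.map id ρ = pval (v ∘ ρ) := by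
    funext s
    rcases s with e | i <;> rfl
  rw [hval, hθ]

theorem isDef_eq {n : ℕ} (i j : Fin n) : IsDef L n fun v : Fin n → M => v i = v j := by
  refine ⟨Term.equal (Term.var (Sum.inr i)) (Term.var (Sum.inr j)), fun v => ?_⟩
  rw [Formula.realize_equal]
  simp [pval]

theorem isDef_form1 (θ : L.Formula (↥(∅ : Set M) ⊕ Fin 1)) {n : ℕ} (i : Fin n) :
    IsDef L n fun v => θ.Realize (pval ![v i]) := by
  have h0 : IsDef L 1 fun v : Fin 1 → M => θ.Realize (pval v) := ⟨θ, fun _ => Iff.rfl⟩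
  refine (isDef_comp h0 ![i]).congr fun v => ?_
  have hv : v ∘ ![i] = ![v i] := by
    funext s
    rw [Subsingleton.elim s 0]
    rfl
  rw [hv]

theorem isDef_form2 (θ : L.Formula (↥(∅ : Set M) ⊕ Fin 2)) {n : ℕ} (i j : Fin n) :
    IsDef L n fun v => θ.Realize (pval ![v i, v j]) := by
  have h0 : IsDef L 2 fun v : Fin 2 → M => θ.Realize (pval v) := ⟨θ, fun _ => Iff.rfl⟩
  refine (isDef_comp h0 ![i, j]).congr fun v => ?_
  have hv : v ∘ ![i, j] = ![v i, v j] := by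
    funext s
    fin_cases s <;> rfl
  rw [hv]

theorem IsDef.ex {n : ℕ} {P : (Fin (n + 1) → M) → Prop} (hP : IsDef L (n + 1) P) :
    IsDef L n fun v => ∃ y : M, P (Fin.snoc v y) := by
  obtain ⟨θ, hθ⟩ := hP
  refine ⟨(θ.relabel (Sum.elim (fun e => Sum.inl (Sum.inl e))
    (fun i : Fin (n + 1) => Fin.lastCases (Sum.inr (0 : Fin 1))
      (fun j => Sum.inl (Sum.inr j)) i))).iExs (Fin 1), fun v => ?_⟩
  rw [Formula.realize_iExs]
  have key : ∀ i : Fin 1 → M,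
      (Sum.elim (pval v) i ∘ (Sum.elim (fun e => Sum.inl (Sum.inl e))
        (fun i' : Fin (n + 1) => Fin.lastCases (Sum.inr (0 : Fin 1))
          (fun j => Sum.inl (Sum.inr j)) i') : ↥(∅ : Set M) ⊕ Fin (n+1) → (↥(∅ : Set M) ⊕ Fin n) ⊕ Fin 1))
      = pval (Fin.snoc v (i 0)) := by
    intro i
    funext s
    rcases s with e | k
    · rfl
    · induction k using Fin.lastCases with
      | last => simp [pval, Fin.snoc_last]
      | cast j => simp [pval, Fin.snoc_castSucc]
  constructor
  · rintro ⟨i, hi⟩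
    rw [Formula.realize_relabel, key i] at hi
    exact ⟨i 0, (hθ _).mp hi⟩
  · rintro ⟨y, hy⟩
    refine ⟨fun _ => y, ?_⟩
    rw [Formula.realize_relabel, key fun _ => y]
    exact (hθ _).mpr hy

theorem IsDef.all {n : ℕ} {P : (Fin (n + 1) → M) → Prop} (hP : IsDef L (n + 1) P) :
    IsDef L n fun v => ∀ y : M, P (Fin.snoc v y) :=
  hP.not.ex.not.congr fun v => not_exists_not

theorem IsDef.dclsubst {n : ℕ} {P : (Fin (n + 1) → M) → Prop} (hP : IsDef L (n + 1) P)
    {c : M} (hc : c ∈ dclSet L (∅ : Set M)) : IsDef L n fun v => P (Fin.snoc v c) := by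
  obtain ⟨θc, hc1, hc2⟩ := hc
  have h2 : IsDef L (n + 1) fun v => θc.Realize (pval ![v (Fin.last n)]) ∧ P v :=
    (isDef_form1 θc (Fin.last n)).and hP
  refine h2.ex.congr fun v => ?_
  constructor
  · rintro ⟨y, hy1, hy2⟩
    rw [Fin.snoc_last] at hy1
    rwa [hc2 y hy1] at hy2
  · intro hPc
    refine ⟨c, ?_, hPc⟩
    rw [Fin.snoc_last]
    exact hc1

end Defin

/-- claim in Lemma 6. If `p ∈ S₁(T)` is simple, witnessed by `C`
and `(D, <)`, and `a, b ∈ p(M)` satisfy `a < Sⁿ(b)` for all `n ∈ ℤ`, then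
`tp(a/b)` is a `C`-type: every formula over `{b}` realized by `a` is satisfied by
infinitely many elements of `C`. -/
theorem statement15 (L : FirstOrder.Language.{u, v}) (hL : L.card ≤ ℵ₀)
    (T : L.Theory) (hT : T.IsComplete)
    (M : Type w) [L.Structure M] (hMT : M ⊨ T) (hMinf : Infinite M)
    (hsat : IsAleph1Saturated L M)
    (p : Set (L.Formula (↥(∅ : Set M) ⊕ Fin 1))) (C : Set M)
    (δ : L.Formula (↥(∅ : Set M) ⊕ Fin 1)) (lt : L.Formula (↥(∅ : Set M) ⊕ Fin 2))
    (hp : IsSimpleWitness (∅ : Set M) p C δ lt)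
    (S : M → M)
    (hS : ∀ a ∈ typeSet (∅ : Set M) p,
      SuccIn (gRel (∅ : Set M) δ lt) (typeSet (∅ : Set M) p) a (S a))
    (hSsurj : ∀ b ∈ typeSet (∅ : Set M) p, ∃ a ∈ typeSet (∅ : Set M) p, S a = b)
    (a b : M) (ha : a ∈ typeSet (∅ : Set M) p) (hb : b ∈ typeSet (∅ : Set M) p)
    (hab : ∀ (k : ℤ) (z : M), zIter S k b z → gRel (∅ : Set M) δ lt a z) :
    ∀ φ : L.Formula (↥({b} : Set M) ⊕ Fin 1),
      φ.Realize (pval ![a]) → {c ∈ C | φ.Realize (pval ![c])}.Infinite := by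
  classical
  obtain ⟨⟨hFS, hcom⟩, hCinf, hCdcl, hLin, hInitP, hOm, hIff⟩ := hp
  intro φ hφa
  by_contra hInf
  rw [Set.not_infinite] at hInf
  set D : Set M := defSet (∅ : Set M) δ with hD
  set R : M → M → Prop := gRel (∅ : Set M) δ lt with hR
  have hctx : OrdCtx R D C :=
    { mem := fun hxy => ⟨hxy.1, hxy.2.1⟩
      irrefl' := hLin.1
      trans' := hLin.2.1
      tri := hLin.2.2
      subC := hInitP.1
      init := hInitP.2
      finPred := hOm.2
      infC := hCinf }
  -- the key transfer principles between `b` (or any realization of `p`) and `C`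
  have keyIff : ∀ P : M → Prop, IsDefP L P → ∀ e ∈ typeSet (∅ : Set M) p,
      (P e ↔ {c ∈ C | ¬ P c}.Finite) := by
    rintro P ⟨θ, hθ⟩ e he
    have hsetEq : {c ∈ C | ¬ θ.Realize (pval ![c])} = {c ∈ C | ¬ P c} := by
      ext c
      simp [hθ]
    constructor
    · intro hPe
      rcases hcom θ with hin | hnin
      · rw [← hsetEq]
        exact (hIff θ).mp hin
      · exfalso
        have hnr := he _ hnin
        rw [Formula.realize_not] at hnr
        exact hnr ((hθ e).mpr hPe)
    · intro hfin
      exact (hθ e).mp (he θ ((hIff θ).mpr (hsetEq ▸ hfin)))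
  have keyDichot : ∀ P : M → Prop, IsDefP L P →
      {c ∈ C | P c}.Finite ∨ {c ∈ C | ¬ P c}.Finite := by
    rintro P ⟨θ, hθ⟩
    rcases hcom θ with hin | hnin
    · right
      have hfin := (hIff θ).mp hin
      have hsetEq : {c ∈ C | ¬ θ.Realize (pval ![c])} = {c ∈ C | ¬ P c} := by
        ext c
        simp [hθ]
      rwa [hsetEq] at hfin
    · left
      have hfin := (hIff (BoundedFormula.not θ)).mp hnin
      have hsetEq : {c ∈ C | ¬ Formula.Realize (BoundedFormula.not θ) (pval ![c])}
          = {c ∈ C | P c} := by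
        ext c
        constructor
        · rintro ⟨hcC, hcr⟩
          rw [Formula.realize_not, not_not] at hcr
          exact ⟨hcC, (hθ c).mp hcr⟩
        · rintro ⟨hcC, hcP⟩
          refine ⟨hcC, ?_⟩
          rw [Formula.realize_not, not_not]
          exact (hθ c).mpr hcP
      rwa [hsetEq] at hfin
  -- flatten `φ` to a two-variable formula over `∅`
  set ψ₂ : L.Formula (↥(∅ : Set M) ⊕ Fin 2) :=
    φ.relabel (Sum.elim (fun _ => Sum.inr 1) (fun _ => Sum.inr (0 : Fin 2))) with hψ₂
  have bridge : ∀ x : M, defRel (∅ : Set M) ψ₂ x b ↔ φ.Realize (pval ![x]) := by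
    intro x
    show ψ₂.Realize (pval ![x, b]) ↔ _
    rw [hψ₂, Formula.realize_relabel]
    have hval : pval (A := (∅ : Set M)) ![x, b] ∘
        (Sum.elim (fun _ => Sum.inr 1) (fun _ => Sum.inr (0 : Fin 2)) :
          ↥({b} : Set M) ⊕ Fin 1 → ↥(∅ : Set M) ⊕ Fin 2) = pval ![x] := by
      funext s
      rcases s with e | i
      · exact (Set.eq_of_mem_singleton e.2).symm
      · rw [Subsingleton.elim i 0]
        rfl
    rw [hval]
  have hZfin : {c ∈ C | defRel (∅ : Set M) ψ₂ c b}.Finite := by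
    have hseq : {c ∈ C | defRel (∅ : Set M) ψ₂ c b} = {c ∈ C | φ.Realize (pval ![c])} := by
      ext c
      exact and_congr_right fun _ => bridge c
    rw [hseq]
    exact hInf
  obtain ⟨cs, hcsC, hcs⟩ := hctx.above (fun c hc => hc.1) hZfin
  -- the guarded relation Ψ
  set Ψ : M → M → Prop := fun x y => defRel (∅ : Set M) ψ₂ x y ∧ R x y ∧ R cs x with hΨ
  set MinW : M → M → Prop := fun u y => Ψ u y ∧ ∀ z, Ψ z y → z = u ∨ R u z with hMin
  set SuccD : M → M → Prop := fun y z => R y z ∧ ∀ w, ¬ (R y w ∧ R w z) with hSuc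
  -- definability of all relevant predicates
  have defD : ∀ {n : ℕ} (i : Fin n), IsDef L n fun v => v i ∈ D :=
    fun i => (isDef_form1 δ i).congr fun v => Iff.rfl
  have defLT : ∀ {n : ℕ} (i j : Fin n), IsDef L n fun v => defRel (∅ : Set M) lt (v i) (v j) :=
    fun i j => (isDef_form2 lt i j).congr fun v => Iff.rfl
  have defR : ∀ {n : ℕ} (i j : Fin n), IsDef L n fun v => R (v i) (v j) :=
    fun i j => ((defD i).and ((defD j).and (defLT i j))).congr fun v => Iff.rfl
  have defRcs : ∀ {n : ℕ} (i : Fin n), IsDef L n fun v => R cs (v i) := by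
    intro n i
    have h1 : IsDef L (n + 1) fun v => R (v (Fin.last n)) (v i.castSucc) := defR _ _
    refine (h1.dclsubst (hCdcl hcsC)).congr fun v => ?_
    rw [Fin.snoc_last, Fin.snoc_castSucc]
  have defΨ : ∀ {n : ℕ} (i j : Fin n), IsDef L n fun v => Ψ (v i) (v j) :=
    fun i j => ((isDef_form2 ψ₂ i j).and ((defR i j).and (defRcs i))).congr fun v => Iff.rfl
  have defMinW : ∀ {n : ℕ} (i j : Fin n), IsDef L n fun v => MinW (v i) (v j) := by
    intro n i j
    have inner : IsDef L (n + 1) fun v =>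
        Ψ (v (Fin.last n)) (v j.castSucc) →
          (v (Fin.last n) = v i.castSucc ∨ R (v i.castSucc) (v (Fin.last n))) :=
      (defΨ _ _).imp ((isDef_eq _ _).or (defR _ _))
    refine ((defΨ i j).and (inner.all.congr fun v => ?_)).congr fun v => Iff.rfl
    simp only [Fin.snoc_last, Fin.snoc_castSucc]
  have defSuccD : ∀ {n : ℕ} (i j : Fin n), IsDef L n fun v => SuccD (v i) (v j) := by
    intro n i j
    have inner : IsDef L (n + 1) fun v =>
        ¬ (R (v i.castSucc) (v (Fin.last n)) ∧ R (v (Fin.last n)) (v j.castSucc)) :=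
      ((defR _ _).and (defR _ _)).not
    refine ((defR i j).and (inner.all.congr fun v => ?_)).congr fun v => Iff.rfl
    simp only [Fin.snoc_last, Fin.snoc_castSucc]
  have defGap : ∀ (m : ℕ) {n : ℕ} (i j : Fin n), IsDef L n fun v => gapRel R m (v i) (v j) := by
    intro m
    induction m with
    | zero => exact fun i j => defR i j
    | succ m ih =>
      intro n i j
      have inner : IsDef L (n + 1) fun v =>
          R (v i.castSucc) (v (Fin.last n)) ∧ gapRel R m (v (Fin.last n)) (v j.castSucc) :=
        (defR _ _).and (ih _ _)
      refine inner.ex.congr fun v => ?_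
      simp only [Fin.snoc_last, Fin.snoc_castSucc, gapRel]
  have defPη : IsDefP L fun y => ∃ u, Ψ u y :=
    ((defΨ (1 : Fin 2) 0).ex).toP.congr fun x => Iff.rfl
  have defPdom : IsDefP L fun y => ∃ u, MinW u y :=
    ((defMinW (1 : Fin 2) 0).ex).toP.congr fun x => Iff.rfl
  have defPgap : ∀ m : ℕ, IsDefP L fun y => ∃ u, MinW u y ∧ gapRel R m u y :=
    fun m => (((defMinW (1 : Fin 2) 0).and (defGap m (1 : Fin 2) 0)).ex).toP.congr
      fun x => Iff.rfl
  have defPdec : IsDefP L fun y => ∃ z u w', SuccD y z ∧ MinW u y ∧ MinW w' z ∧ R w' u := by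
    have h4 : IsDef L 4 fun v =>
        SuccD (v 0) (v 1) ∧ MinW (v 2) (v 0) ∧ MinW (v 3) (v 1) ∧ R (v 3) (v 2) :=
      (defSuccD 0 1).and ((defMinW 2 0).and ((defMinW 3 1).and (defR 3 2)))
    exact h4.ex.ex.ex.toP.congr fun x => Iff.rfl
  have defPeq : IsDefP L fun y => ∃ z u, SuccD y z ∧ MinW u y ∧ MinW u z := by
    have h3 : IsDef L 3 fun v => SuccD (v 0) (v 1) ∧ MinW (v 2) (v 0) ∧ MinW (v 2) (v 1) :=
      (defSuccD 0 1).and ((defMinW 2 0).and (defMinW 2 1))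
    exact h3.ex.ex.toP.congr fun x => Iff.rfl
  have defPgt : ∀ d : M, d ∈ dclSet L (∅ : Set M) → IsDefP L fun y => ∀ u, Ψ u y → R d u := by
    intro d hd
    have h3 : IsDef L 3 fun v => Ψ (v 2) (v 0) → R (v 1) (v 2) := (defΨ 2 0).imp (defR 1 2)
    exact (h3.all.dclsubst hd).toP.congr fun x => Iff.rfl
  -- basic facts about the configuration
  have hRab : R a b := by
    refine hab 0 b ?_
    simp [zIter]
  have hPcs : IsDefP L fun x => R cs x := (defRcs (0 : Fin 1)).toP.congr fun x => Iff.rfl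
  have hRcsa : R cs a := by
    refine (keyIff _ hPcs a ha).mpr ?_
    refine ((hctx.finPred cs hcsC).insert cs).subset ?_
    rintro c ⟨hcC, hnlt⟩
    rcases hctx.tri cs (hctx.subC hcsC) c (hctx.subC hcC) with he | hlt | hgt
    · exact Set.mem_insert_iff.mpr (Or.inl he.symm)
    · exact absurd hlt hnlt
    · exact Set.mem_insert_iff.mpr (Or.inr ⟨hcC, hgt⟩)
  have hΨab : Ψ a b := ⟨(bridge a).mpr hφa, hRab, hRcsa⟩
  have hWb : ∀ u, Ψ u b → ∀ d ∈ C, R d u := by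
    intro u hu d hd
    have huC : u ∉ C := by
      intro huC
      exact hctx.asym (hcs u ⟨huC, hu.1⟩) hu.2.2
    have huD : u ∈ D := (hctx.mem hu.2.1).1
    rcases hctx.tri d (hctx.subC hd) u huD with he | hlt | hgt
    · exact absurd (he ▸ hd) huC
    · exact hlt
    · exact absurd (hctx.init d hd u huD hgt) huC
  have hWC : ∀ c' ∈ C, ∀ u, Ψ u c' → u ∈ C ∧ R u c' :=
    fun c' hc' u hu => ⟨hctx.init c' hc' u (hctx.mem hu.2.1).1 hu.2.1, hu.2.1⟩
  have hηfin : {c ∈ C | ¬ ∃ u, Ψ u c}.Finite := (keyIff _ defPη b hb).mp ⟨a, hΨab⟩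
  have hdomC : ∀ c' ∈ C, (∃ u, Ψ u c') → ∃ u, MinW u c' := by
    rintro c' hc' ⟨u0, hu0⟩
    have hWfin : {u | Ψ u c'}.Finite :=
      (hctx.finPred c' hc').subset fun u hu => (hWC c' hc' u hu)
    obtain ⟨m, hm, hmin⟩ := hctx.minOf hWfin
      (fun u hu => hctx.subC (hWC c' hc' u hu).1) ⟨u0, hu0⟩
    exact ⟨m, hm, fun z hz => hmin z hz⟩
  have hdomfin : {c ∈ C | ¬ ∃ u, MinW u c}.Finite := by
    refine hηfin.subset ?_
    rintro c ⟨hcC, hcd⟩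
    exact ⟨hcC, fun hη => hcd (hdomC c hcC hη)⟩
  have hMuniq : ∀ y u u', MinW u y → MinW u' y → u = u' := by
    intro y u u' h1 h2
    rcases h2.2 u h1.1 with he | hlt
    · exact he
    · rcases h1.2 u' h2.1 with he' | hlt'
      · exact he'.symm
      · exact (hctx.asym hlt' hlt).elim
  obtain ⟨a₀, ha₀⟩ : ∃ u, MinW u b := (keyIff _ defPdom b hb).mpr hdomfin
  -- the chain of predecessors of b among realizations of p
  have hwit : ∃ w : ℕ → M, w 0 = b ∧ (∀ n, w n ∈ typeSet (∅ : Set M) p) ∧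
      (∀ n, S (w (n + 1)) = w n) ∧ (∀ n, S^[n] (w n) = b) := by
    let pre : {e // e ∈ typeSet (∅ : Set M) p} → {e // e ∈ typeSet (∅ : Set M) p} := fun e =>
      ⟨(hSsurj e.1 e.2).choose, ((hSsurj e.1 e.2).choose_spec).1⟩
    have hpre : ∀ e, S (pre e).1 = e.1 := fun e => ((hSsurj e.1 e.2).choose_spec).2
    refine ⟨fun n => (pre^[n] ⟨b, hb⟩).1, rfl, fun n => (pre^[n] ⟨b, hb⟩).2, ?_, ?_⟩
    · intro n
      show S (pre^[n + 1] ⟨b, hb⟩).1 = (pre^[n] ⟨b, hb⟩).1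
      rw [Function.iterate_succ_apply' pre n _]
      exact hpre _
    · intro n
      induction n with
      | zero => rfl
      | succ n ih =>
        show S^[n + 1] (pre^[n + 1] ⟨b, hb⟩).1 = b
        rw [Function.iterate_succ_apply' pre n _, Function.iterate_succ_apply S, hpre _]
        exact ih
  obtain ⟨w, hw0, hwT, hwS, hwIter⟩ := hwit
  have hRaw : ∀ n, R a (w n) := by
    intro n
    rcases Nat.eq_zero_or_pos n with rfl | hn
    · rw [hw0]
      exact hRab
    · refine hab (-(n : ℤ)) (w n) ?_
      have hneg : ¬ (0 ≤ -(n : ℤ)) := by omega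
      unfold zIter
      rw [if_neg hneg, neg_neg, Int.toNat_natCast]
      exact hwIter n
  have hRchain : ∀ n, R (w (n + 1)) (w n) := by
    intro n
    have hss := (hS (w (n + 1)) (hwT (n + 1))).2.2.1
    rwa [hwS n] at hss
  have hRa₀w : ∀ n, R a₀ (w n) := by
    intro n
    rcases ha₀.2 a hΨab with he | hlt
    · rw [← he]
      exact hRaw n
    · exact hctx.rtrans hlt (hRaw n)
  have hgapb : ∀ m, gapRel R m a₀ b := by
    have hgen : ∀ m, ∀ x, R x (w m) → gapRel R m x b := by
      intro m
      induction m with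
      | zero =>
        intro x hx
        rw [hw0] at hx
        exact hx
      | succ m ih =>
        intro x hx
        exact ⟨w (m + 1), hx, ih (w (m + 1)) (hRchain m)⟩
    exact fun m => hgen m a₀ (hRa₀w m)
  -- no eventually decreasing minimal witness
  have hdecfin : {c ∈ C | ∃ z u w', SuccD c z ∧ MinW u c ∧ MinW w' z ∧ R w' u}.Finite := by
    rcases keyDichot _ defPdec with hfin | hcof
    · exact hfin
    exfalso
    have hBadC : ({c ∈ C | ¬ ∃ z u w', SuccD c z ∧ MinW u c ∧ MinW w' z ∧ R w' u} ∪
        {c ∈ C | ¬ ∃ u, MinW u c} : Set M) ⊆ C := by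
      rintro c (hc | hc) <;> exact hc.1
    obtain ⟨f, hfC, hfB, hfS, hfmono, hfpos⟩ := hctx.tailSeq hBadC (hcof.union hdomfin)
    have hdomf : ∀ k, ∃ u, MinW u (f k) := by
      intro k
      by_contra hcon
      exact hfB k (Set.mem_union_right _ ⟨hfC k, hcon⟩)
    choose G hG using hdomf
    have hGC : ∀ k, G k ∈ C := fun k => (hWC (f k) (hfC k) (G k) (hG k).1).1
    have hdec : ∀ k, R (G (k + 1)) (G k) := by
      intro k
      have hdk : ∃ z u w', SuccD (f k) z ∧ MinW u (f k) ∧ MinW w' z ∧ R w' u := by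
        by_contra hcon
        exact hfB k (Set.mem_union_left _ ⟨hfC k, hcon⟩)
      obtain ⟨z, u, w', hz, hu, hw', hrw⟩ := hdk
      have hzf : z = f (k + 1) := hctx.succ_unique hz.1 hz.2 (hfS k).1 (hfS k).2
      have huG : u = G k := hMuniq (f k) u (G k) hu (hG k)
      have hwG : w' = G (k + 1) := by
        rw [hzf] at hw'
        exact hMuniq (f (k + 1)) w' (G (k + 1)) hw' (hG (k + 1))
      rw [← huG, ← hwG]
      exact hrw
    have hdecs : ∀ l k, k < l → R (G l) (G k) := by
      intro l
      induction l with
      | zero => exact fun k hk => absurd hk (Nat.not_lt_zero k)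
      | succ l ih =>
        intro k hk
        rcases Nat.lt_or_ge k l with h1 | h2
        · exact hctx.rtrans (hdec l) (ih k h1)
        · have hkl : k = l := by omega
          subst hkl
          exact hdec k
    have hinj : Function.Injective fun k => G (k + 1) := by
      intro k l hkl
      by_contra hne
      simp only at hkl
      rcases Nat.lt_or_ge k l with h1 | h2
      · have hcon := hdecs (l + 1) (k + 1) (by omega)
        rw [hkl] at hcon
        exact hctx.nrefl hcon
      · have hcon := hdecs (k + 1) (l + 1) (by omega)
        rw [hkl] at hcon
        exact hctx.nrefl hcon
    refine Set.infinite_of_injective_forall_mem hinj (fun k => ?_)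
      (hctx.finPred (G 0) (hGC 0))
    exact ⟨hGC (k + 1), hdecs (k + 1) 0 (by omega)⟩
  -- no eventually constant minimal witness
  have heqfin : {c ∈ C | ∃ z u, SuccD c z ∧ MinW u c ∧ MinW u z}.Finite := by
    rcases keyDichot _ defPeq with hfin | hcof
    · exact hfin
    exfalso
    have hBadC : ({c ∈ C | ¬ ∃ z u, SuccD c z ∧ MinW u c ∧ MinW u z} ∪
        {c ∈ C | ¬ ∃ u, MinW u c} : Set M) ⊆ C := by
      rintro c (hc | hc) <;> exact hc.1
    obtain ⟨f, hfC, hfB, hfS, hfmono, hfpos⟩ := hctx.tailSeq hBadC (hcof.union hdomfin)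
    have hdomf : ∀ k, ∃ u, MinW u (f k) := by
      intro k
      by_contra hcon
      exact hfB k (Set.mem_union_right _ ⟨hfC k, hcon⟩)
    choose G hG using hdomf
    have hGC : ∀ k, G k ∈ C := fun k => (hWC (f k) (hfC k) (G k) (hG k).1).1
    have heqs : ∀ k, G (k + 1) = G k := by
      intro k
      have hek : ∃ z u, SuccD (f k) z ∧ MinW u (f k) ∧ MinW u z := by
        by_contra hcon
        exact hfB k (Set.mem_union_left _ ⟨hfC k, hcon⟩)
      obtain ⟨z, u, hz, hu1, hu2⟩ := hek
      have hzf : z = f (k + 1) := hctx.succ_unique hz.1 hz.2 (hfS k).1 (hfS k).2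
      rw [hzf] at hu2
      rw [← hMuniq (f (k + 1)) u (G (k + 1)) hu2 (hG (k + 1)),
        hMuniq (f k) u (G k) hu1 (hG k)]
    have hGconst : ∀ k, G k = G 0 := by
      intro k
      induction k with
      | zero => rfl
      | succ k ih => rw [heqs k, ih]
    have hgtfin : {c ∈ C | ¬ ∀ u, Ψ u c → R (G 0) u}.Finite :=
      (keyIff _ (defPgt (G 0) (hCdcl (hGC 0))) b hb).mp
        (fun u hu => hWb u hu (G 0) (hGC 0))
    obtain ⟨k, hk⟩ := hctx.escape hfC hfmono hgtfin
    have hgt : ∀ u, Ψ u (f k) → R (G 0) u := by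
      by_contra hcon
      exact hk ⟨hfC k, hcon⟩
    have hcon := hgt (G k) (hG k).1
    rw [hGconst k] at hcon
    exact hctx.nrefl hcon
  -- the final contradiction
  have hBadC : ({c ∈ C | ¬ ∃ u, MinW u c} ∪
      ({c ∈ C | ∃ z u w', SuccD c z ∧ MinW u c ∧ MinW w' z ∧ R w' u} ∪
        {c ∈ C | ∃ z u, SuccD c z ∧ MinW u c ∧ MinW u z}) : Set M) ⊆ C := by
    rintro c (hc | hc | hc) <;> exact hc.1
  obtain ⟨f, hfC, hfB, hfS, hfmono, hfpos⟩ :=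
    hctx.tailSeq hBadC (hdomfin.union (hdecfin.union heqfin))
  have hdomf : ∀ k, ∃ u, MinW u (f k) := by
    intro k
    by_contra hcon
    exact hfB k (Set.mem_union_left _ ⟨hfC k, hcon⟩)
  choose G hG using hdomf
  have hGC : ∀ k, G k ∈ C := fun k => (hWC (f k) (hfC k) (G k) (hG k).1).1
  have hinc : ∀ k, R (G k) (G (k + 1)) := by
    intro k
    have h1 : ¬ ∃ z u w', SuccD (f k) z ∧ MinW u (f k) ∧ MinW w' z ∧ R w' u := by
      intro hcon
      exact hfB k (Set.mem_union_right _ (Set.mem_union_left _ ⟨hfC k, hcon⟩))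
    have h2 : ¬ ∃ z u, SuccD (f k) z ∧ MinW u (f k) ∧ MinW u z := by
      intro hcon
      exact hfB k (Set.mem_union_right _ (Set.mem_union_right _ ⟨hfC k, hcon⟩))
    rcases hctx.tri (G k) (hctx.subC (hGC k)) (G (k + 1)) (hctx.subC (hGC (k + 1)))
      with he | hlt | hgt
    · refine absurd ⟨f (k + 1), G k, ⟨(hfS k).1, (hfS k).2⟩, hG k, ?_⟩ h2
      rw [he]
      exact hG (k + 1)
    · exact hlt
    · exact absurd ⟨f (k + 1), G k, G (k + 1), ⟨(hfS k).1, (hfS k).2⟩, hG k,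
        hG (k + 1), hgt⟩ h1
  have hposG : ∀ k, k ≤ posIn R C (G k) := by
    intro k
    induction k with
    | zero => exact Nat.zero_le _
    | succ k ih =>
      have hstep := hctx.pos_lt (hGC k) (hGC (k + 1)) (hinc k)
      omega
  have hgapNfin : {c ∈ C | ¬ ∃ u, MinW u c ∧ gapRel R (posIn R C (f 0) + 1) u c}.Finite :=
    (keyIff _ (defPgap (posIn R C (f 0) + 1)) b hb).mp
      ⟨a₀, ha₀, hgapb (posIn R C (f 0) + 1)⟩
  obtain ⟨k, hk⟩ := hctx.escape hfC hfmono hgapNfin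
  have hPg : ∃ u, MinW u (f k) ∧ gapRel R (posIn R C (f 0) + 1) u (f k) := by
    by_contra hcon
    exact hk ⟨hfC k, hcon⟩
  obtain ⟨u, hu, hgap⟩ := hPg
  have huG : u = G k := hMuniq (f k) u (G k) hu (hG k)
  obtain ⟨T, hTcard, hT⟩ := hctx.gap_count hgap (hfC k)
  have huC : u ∈ C := by
    rw [huG]
    exact hGC k
  have hineq := hctx.pos_gap huC (hfC k) (hctx.gap_lt hgap) T hT
  rw [hTcard, huG] at hineq
  have h1 := hposG k
  have h2 := hfpos k
  omega

end PaperDef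
end

section
/- Let T be a complete first-order theory with infinite models in a countable language L, let M be an ℵ₁-saturated model of T, let p ∈ S₁(T), and let <_p be a relatively ∅-definable binary relation on p(M) (i.e., <_p equals p(M)² ∩ φ(M²) for some L-formula φ(x,y)) which is a discrete linear order on p(M); let S_p denote its successor function. Then for every a ∈ p(M) there exists an infinite {a}-definable set D₀ and an {a}-definable linear order on D₀ which is discrete and has {S_pⁿ(a) : n ∈ ω} as an initial part. -/
open FirstOrder FirstOrder.Language Set Cardinal

universe u v w

namespace PaperDef

variable {L : FirstOrder.Language.{u, v}}

variable {M : Type w} [L.Structure M]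

section Aux
variable {γ : Type*}
@[simp] lemma pval_inr {A : Set M} {n : ℕ} (x : Fin n → M) (i : Fin n) :
    pval (A := A) x (Sum.inr i) = x i := rfl
@[simp] lemma pval_inl {A : Set M} {n : ℕ} (x : Fin n → M) (e : ↥A) :
    pval (A := A) x (Sum.inl e) = e.1 := rfl
noncomputable def iExsF {α β δ : Type*} [Finite δ] (f : α → β ⊕ δ) (φ : L.Formula α) :
    L.Formula β := Formula.iExs δ (φ.relabel f)
noncomputable def iAllsF {α β δ : Type*} [Finite δ] (f : α → β ⊕ δ) (φ : L.Formula α) :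
    L.Formula β := Formula.iAlls δ (φ.relabel f)
lemma realize_iExsF {α β δ : Type*} [Finite δ] {f : α → β ⊕ δ} {φ : L.Formula α}
    {v : β → M} : (iExsF f φ).Realize v ↔
      ∃ i : δ → M, φ.Realize (fun a => Sum.elim v i (f a)) := by
  rw [iExsF, Formula.realize_iExs]
  simp only [Formula.realize_relabel]
  rfl
lemma realize_iAllsF {α β δ : Type*} [Finite δ] {f : α → β ⊕ δ} {φ : L.Formula α}
    {v : β → M} : (iAllsF f φ).Realize v ↔
      ∀ i : δ → M, φ.Realize (fun a => Sum.elim v i (f a)) := by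
  rw [iAllsF, Formula.realize_iAlls]
  simp only [Formula.realize_relabel]
  rfl
noncomputable def conjF (s : Finset (L.Formula γ)) : L.Formula γ :=
  s.toList.foldr (· ⊓ ·) ⊤
lemma realize_conjF {s : Finset (L.Formula γ)} {v : γ → M} :
    (conjF s).Realize v ↔ ∀ φ ∈ s, φ.Realize v := by
  have := BoundedFormula.realize_foldr_inf (M := M) s.toList v (default : Fin 0 → M)
  constructor
  · intro h φ hφ
    exact (this.1 h) φ (by simpa using hφ)
  · intro h
    exact this.2 (fun φ hφ => h φ (by simpa using hφ))
noncomputable def sub1 (δ : L.Formula (↥(∅ : Set M) ⊕ Fin 1)) (i : γ) : L.Formula γ :=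
  δ.relabel (Sum.elim (fun e => absurd e.2 (Set.notMem_empty _)) (fun _ => i))
lemma realize_sub1 {δ : L.Formula (↥(∅ : Set M) ⊕ Fin 1)} {i : γ} {v : γ → M} :
    (sub1 δ i).Realize v ↔ δ.Realize (pval ![v i]) := by
  rw [sub1, Formula.realize_relabel]
  have : (v ∘ Sum.elim (fun e : ↥(∅ : Set M) => absurd e.2 (Set.notMem_empty _))
      (fun _ : Fin 1 => i)) = pval ![v i] := by
    funext x
    rcases x with e | j
    · exact absurd e.2 (Set.notMem_empty _)
    · fin_cases j; rfl
  rw [this]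
noncomputable def sub2 (φ : L.Formula (↥(∅ : Set M) ⊕ Fin 2)) (i j : γ) : L.Formula γ :=
  φ.relabel (Sum.elim (fun e => absurd e.2 (Set.notMem_empty _)) ![i, j])
lemma realize_sub2 {φ : L.Formula (↥(∅ : Set M) ⊕ Fin 2)} {i j : γ} {v : γ → M} :
    (sub2 φ i j).Realize v ↔ φ.Realize (pval ![v i, v j]) := by
  rw [sub2, Formula.realize_relabel]
  have : (v ∘ Sum.elim (fun e : ↥(∅ : Set M) => absurd e.2 (Set.notMem_empty _)) ![i, j])
      = pval ![v i, v j] := by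
    funext x
    rcases x with e | j
    · exact absurd e.2 (Set.notMem_empty _)
    · fin_cases j <;> rfl
  rw [this]
noncomputable def sub3 (φ : L.Formula (↥(∅ : Set M) ⊕ Fin 3)) (i j k : γ) : L.Formula γ :=
  φ.relabel (Sum.elim (fun e => absurd e.2 (Set.notMem_empty _)) ![i, j, k])
lemma realize_sub3 {φ : L.Formula (↥(∅ : Set M) ⊕ Fin 3)} {i j k : γ} {v : γ → M} :
    (sub3 φ i j k).Realize v ↔ φ.Realize (pval ![v i, v j, v k]) := by
  rw [sub3, Formula.realize_relabel]
  have : (v ∘ Sum.elim (fun e : ↥(∅ : Set M) => absurd e.2 (Set.notMem_empty _)) ![i, j, k])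
      = pval ![v i, v j, v k] := by
    funext x
    rcases x with e | j
    · exact absurd e.2 (Set.notMem_empty _)
    · fin_cases j <;> rfl
  rw [this]
noncomputable def eqF (i j : γ) : L.Formula γ := Term.equal (Term.var i) (Term.var j)
lemma realize_eqF {i j : γ} {v : γ → M} : (eqF (L := L) i j).Realize v ↔ v i = v j := by
  simp [eqF]
lemma pval_chain {A : Set M} {k l m : ℕ} (xs : Fin k → M) (i : Fin l → M)
    (g : Fin m → (↥A ⊕ Fin k) ⊕ Fin l) :
    (fun b => Sum.elim (pval xs) i
      ((Sum.elim (Sum.inl ∘ Sum.inl) g : ↥A ⊕ Fin m → (↥A ⊕ Fin k) ⊕ Fin l) b))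
      = pval (fun j => Sum.elim (pval xs) i (g j)) := by
  funext b
  rcases b with s | j <;> rfl

end Aux

lemma realizeT (hsat : IsAleph1Saturated L M) {A : Set M} (hA : A.Countable)
    {q : Set (L.Formula (↥A ⊕ Fin 1))} (hq : FinSat A q) :
    ∃ c : M, ∀ ψ ∈ q, ψ.Realize (pval ![c]) := by
  obtain ⟨c, hc⟩ := hsat A hA q hq
  exact ⟨c, hc⟩

section Sat
variable {p : Set (L.Formula (↥(∅ : Set M) ⊕ Fin 1))}

lemma pairP (hsat : IsAleph1Saturated L M) (ζ : L.Formula (↥(∅ : Set M) ⊕ Fin 2))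
    (h : ∀ s : Finset (L.Formula (↥(∅ : Set M) ⊕ Fin 1)), ↑s ⊆ p → ∃ x y : M,
      (∀ φ ∈ s, φ.Realize (pval ![x])) ∧ (∀ φ ∈ s, φ.Realize (pval ![y])) ∧
      ζ.Realize (pval ![x, y])) :
    ∃ x y : M, x ∈ typeSet (∅ : Set M) p ∧ y ∈ typeSet (∅ : Set M) p ∧
      ζ.Realize (pval ![x, y]) := by
  classical
  -- stage 1
  let Es : Finset (L.Formula (↥(∅ : Set M) ⊕ Fin 1)) → L.Formula (↥(∅ : Set M) ⊕ Fin 1) :=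
    fun s => iExsF
      (Sum.elim (Sum.inl ∘ Sum.inl) ![Sum.inl (Sum.inr 0), Sum.inr 0] :
        ↥(∅ : Set M) ⊕ Fin 2 → (↥(∅ : Set M) ⊕ Fin 1) ⊕ Fin 1)
      ((sub1 (conjF s) (Sum.inr 1)) ⊓ (sub2 ζ (Sum.inr 0) (Sum.inr 1)))
  have hEs : ∀ (s : Finset (L.Formula (↥(∅ : Set M) ⊕ Fin 1))) (x : M),
      (Es s).Realize (pval ![x]) ↔
      ∃ y : M, (∀ φ ∈ s, φ.Realize (pval ![y])) ∧ ζ.Realize (pval ![x, y]) := by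
    intro s x
    rw [realize_iExsF]
    constructor
    · rintro ⟨i, hi⟩
      have hv : (fun a => Sum.elim (pval ![x]) i
          ((Sum.elim (Sum.inl ∘ Sum.inl) ![Sum.inl (Sum.inr 0), Sum.inr 0] :
            ↥(∅ : Set M) ⊕ Fin 2 → (↥(∅ : Set M) ⊕ Fin 1) ⊕ Fin 1) a)) = pval ![x, i 0] := by
        funext a
        rcases a with e | j
        · rfl
        · fin_cases j <;> rfl
      rw [hv, Formula.realize_inf, realize_sub1, realize_sub2] at hi
      refine ⟨i 0, fun φ hφ => ?_, ?_⟩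
      · have := (realize_conjF (M := M)).1 (by simpa using hi.1)
        exact this φ hφ
      · simpa using hi.2
    · rintro ⟨y, hy, hζ⟩
      refine ⟨![y], ?_⟩
      have hv : (fun a => Sum.elim (pval ![x]) ![y]
          ((Sum.elim (Sum.inl ∘ Sum.inl) ![Sum.inl (Sum.inr 0), Sum.inr 0] :
            ↥(∅ : Set M) ⊕ Fin 2 → (↥(∅ : Set M) ⊕ Fin 1) ⊕ Fin 1) a)) = pval ![x, y] := by
        funext a
        rcases a with e | j
        · rfl
        · fin_cases j <;> rfl
      rw [hv, Formula.realize_inf, realize_sub1, realize_sub2]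
      constructor
      · simpa using (realize_conjF (M := M)).2 hy
      · simpa using hζ

  -- stage 1 saturation
  set q1 : Set (L.Formula (↥(∅ : Set M) ⊕ Fin 1)) :=
    p ∪ (Es '' {s : Finset (L.Formula (↥(∅ : Set M) ⊕ Fin 1)) | ↑s ⊆ p}) with hq1
  have hq1fs : FinSat (∅ : Set M) q1 := by
    intro F hF
    have key : ∀ ψ ∈ F, ∃ s : Finset (L.Formula (↥(∅ : Set M) ⊕ Fin 1)), ↑s ⊆ p ∧
        ∀ x y : M, (∀ φ ∈ s, φ.Realize (pval ![x])) → (∀ φ ∈ s, φ.Realize (pval ![y])) →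
          ζ.Realize (pval ![x, y]) → ψ.Realize (pval ![x]) := by
      intro ψ hψ
      rcases hF hψ with hp | ⟨s, hs, rfl⟩
      · exact ⟨{ψ}, by simpa using hp, fun x y hx _ _ => hx ψ (by simp)⟩
      · exact ⟨s, hs, fun x y hx hy hζ => (hEs s x).2 ⟨y, hy, hζ⟩⟩
    choose! sψ hsub himp using key
    obtain ⟨x, y, hx, hy, hζ⟩ := h (F.biUnion sψ) (by
      intro φ hφ
      simp only [Finset.coe_biUnion, Set.mem_iUnion, Finset.mem_coe] at hφ
      obtain ⟨ψ, hψF, hφs⟩ := hφ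
      exact hsub ψ hψF hφs)
    refine ⟨![x], fun ψ hψ => ?_⟩
    exact himp ψ hψ x y
      (fun φ hφ => hx φ (Finset.mem_biUnion.2 ⟨ψ, hψ, hφ⟩))
      (fun φ hφ => hy φ (Finset.mem_biUnion.2 ⟨ψ, hψ, hφ⟩)) hζ
  obtain ⟨c0, hc0⟩ := realizeT hsat Set.countable_empty hq1fs
  have hc0p : c0 ∈ typeSet (∅ : Set M) p := fun φ hφ => hc0 φ (Or.inl hφ)
  have hc0E : ∀ s : Finset (L.Formula (↥(∅ : Set M) ⊕ Fin 1)), ↑s ⊆ p →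
      ∃ y : M, (∀ φ ∈ s, φ.Realize (pval ![y])) ∧ ζ.Realize (pval ![c0, y]) := by
    intro s hs
    exact (hEs s c0).1 (hc0 (Es s) (Or.inr ⟨s, hs, rfl⟩))
  -- stage 2
  have hc0mem : c0 ∈ ({c0} : Set M) := rfl
  set ζ' : L.Formula (↥({c0} : Set M) ⊕ Fin 1) :=
    sub2 ζ (Sum.inl ⟨c0, hc0mem⟩) (Sum.inr 0) with hζ'
  have hζ'r : ∀ y : M, ζ'.Realize (pval ![y]) ↔ ζ.Realize (pval ![c0, y]) := by
    intro y
    rw [hζ', realize_sub2]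
    rfl
  set q2 : Set (L.Formula (↥({c0} : Set M) ⊕ Fin 1)) :=
    ((fun δ => sub1 δ (Sum.inr 0)) '' p) ∪ {ζ'} with hq2
  have hq2fs : FinSat ({c0} : Set M) q2 := by
    intro F hF
    have key : ∀ ψ ∈ F, ∃ s : Finset (L.Formula (↥(∅ : Set M) ⊕ Fin 1)), ↑s ⊆ p ∧
        ∀ y : M, (∀ φ ∈ s, φ.Realize (pval ![y])) → ζ.Realize (pval ![c0, y]) →
          ψ.Realize (pval ![y]) := by
      intro ψ hψ
      rcases hF hψ with ⟨δ, hδ, rfl⟩ | hψζ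
      · refine ⟨{δ}, by simpa using hδ, fun y hy _ => ?_⟩
        rw [realize_sub1]
        simpa using hy δ (by simp)
      · rcases hψζ with rfl
        exact ⟨∅, by simp, fun y _ hζy => (hζ'r y).2 hζy⟩
    choose! sψ hsub himp using key
    obtain ⟨y, hy, hζy⟩ := hc0E (F.biUnion sψ) (by
      intro φ hφ
      simp only [Finset.coe_biUnion, Set.mem_iUnion, Finset.mem_coe] at hφ
      obtain ⟨ψ, hψF, hφs⟩ := hφ
      exact hsub ψ hψF hφs)
    refine ⟨![y], fun ψ hψ => ?_⟩
    exact himp ψ hψ y (fun φ hφ => hy φ (Finset.mem_biUnion.2 ⟨ψ, hψ, hφ⟩)) hζy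
  obtain ⟨c1, hc1⟩ := realizeT hsat (Set.countable_singleton c0) hq2fs
  refine ⟨c0, c1, hc0p, ?_, ?_⟩
  · intro φ hφ
    have := hc1 (sub1 φ (Sum.inr 0)) (Or.inl ⟨φ, hφ, rfl⟩)
    rw [realize_sub1] at this
    simpa using this
  · exact (hζ'r c1).1 (hc1 ζ' (Or.inr rfl))

lemma tripleP (hsat : IsAleph1Saturated L M) (ζ : L.Formula (↥(∅ : Set M) ⊕ Fin 3))
    (h : ∀ s : Finset (L.Formula (↥(∅ : Set M) ⊕ Fin 1)), ↑s ⊆ p → ∃ x y z : M,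
      (∀ φ ∈ s, φ.Realize (pval ![x])) ∧ (∀ φ ∈ s, φ.Realize (pval ![y])) ∧
      (∀ φ ∈ s, φ.Realize (pval ![z])) ∧ ζ.Realize (pval ![x, y, z])) :
    ∃ x y z : M, x ∈ typeSet (∅ : Set M) p ∧ y ∈ typeSet (∅ : Set M) p ∧
      z ∈ typeSet (∅ : Set M) p ∧ ζ.Realize (pval ![x, y, z]) := by
  classical
  -- stage 1
  let Es : Finset (L.Formula (↥(∅ : Set M) ⊕ Fin 1)) → L.Formula (↥(∅ : Set M) ⊕ Fin 1) :=
    fun s => iExsF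
      (Sum.elim (Sum.inl ∘ Sum.inl) ![Sum.inl (Sum.inr 0), Sum.inr 0, Sum.inr 1] :
        ↥(∅ : Set M) ⊕ Fin 3 → (↥(∅ : Set M) ⊕ Fin 1) ⊕ Fin 2)
      ((sub1 (conjF s) (Sum.inr 1)) ⊓ (sub1 (conjF s) (Sum.inr 2)) ⊓
        (sub3 ζ (Sum.inr 0) (Sum.inr 1) (Sum.inr 2)))
  have hEs : ∀ (s : Finset (L.Formula (↥(∅ : Set M) ⊕ Fin 1))) (x : M),
      (Es s).Realize (pval ![x]) ↔
      ∃ y z : M, (∀ φ ∈ s, φ.Realize (pval ![y])) ∧ (∀ φ ∈ s, φ.Realize (pval ![z])) ∧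
        ζ.Realize (pval ![x, y, z]) := by
    intro s x
    rw [realize_iExsF]
    constructor
    · rintro ⟨i, hi⟩
      have hv : (fun a => Sum.elim (pval ![x]) i
          ((Sum.elim (Sum.inl ∘ Sum.inl) ![Sum.inl (Sum.inr 0), Sum.inr 0, Sum.inr 1] :
            ↥(∅ : Set M) ⊕ Fin 3 → (↥(∅ : Set M) ⊕ Fin 1) ⊕ Fin 2) a))
          = pval ![x, i 0, i 1] := by
        funext a
        rcases a with e | j
        · rfl
        · fin_cases j <;> rfl
      rw [hv, Formula.realize_inf, Formula.realize_inf, realize_sub1, realize_sub1,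
        realize_sub3] at hi
      refine ⟨i 0, i 1, fun φ hφ => ?_, fun φ hφ => ?_, ?_⟩
      · exact (realize_conjF (M := M)).1 (by simpa using hi.1.1) φ hφ
      · exact (realize_conjF (M := M)).1 (by simpa using hi.1.2) φ hφ
      · simpa using hi.2
    · rintro ⟨y, z, hy, hz, hζ⟩
      refine ⟨![y, z], ?_⟩
      have hv : (fun a => Sum.elim (pval ![x]) ![y, z]
          ((Sum.elim (Sum.inl ∘ Sum.inl) ![Sum.inl (Sum.inr 0), Sum.inr 0, Sum.inr 1] :
            ↥(∅ : Set M) ⊕ Fin 3 → (↥(∅ : Set M) ⊕ Fin 1) ⊕ Fin 2) a))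
          = pval ![x, y, z] := by
        funext a
        rcases a with e | j
        · rfl
        · fin_cases j <;> rfl
      rw [hv, Formula.realize_inf, Formula.realize_inf, realize_sub1, realize_sub1,
        realize_sub3]
      refine ⟨⟨?_, ?_⟩, ?_⟩
      · simpa using (realize_conjF (M := M)).2 hy
      · simpa using (realize_conjF (M := M)).2 hz
      · simpa using hζ
  set q1 : Set (L.Formula (↥(∅ : Set M) ⊕ Fin 1)) :=
    p ∪ (Es '' {s : Finset (L.Formula (↥(∅ : Set M) ⊕ Fin 1)) | ↑s ⊆ p}) with hq1
  have hq1fs : FinSat (∅ : Set M) q1 := by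
    intro F hF
    have key : ∀ ψ ∈ F, ∃ s : Finset (L.Formula (↥(∅ : Set M) ⊕ Fin 1)), ↑s ⊆ p ∧
        ∀ x y z : M, (∀ φ ∈ s, φ.Realize (pval ![x])) → (∀ φ ∈ s, φ.Realize (pval ![y])) →
          (∀ φ ∈ s, φ.Realize (pval ![z])) →
          ζ.Realize (pval ![x, y, z]) → ψ.Realize (pval ![x]) := by
      intro ψ hψ
      rcases hF hψ with hp | ⟨s, hs, rfl⟩
      · exact ⟨{ψ}, by simpa using hp, fun x y z hx _ _ _ => hx ψ (by simp)⟩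
      · exact ⟨s, hs, fun x y z hx hy hz hζ => (hEs s x).2 ⟨y, z, hy, hz, hζ⟩⟩
    choose! sψ hsub himp using key
    obtain ⟨x, y, z, hx, hy, hz, hζ⟩ := h (F.biUnion sψ) (by
      intro φ hφ
      simp only [Finset.coe_biUnion, Set.mem_iUnion, Finset.mem_coe] at hφ
      obtain ⟨ψ, hψF, hφs⟩ := hφ
      exact hsub ψ hψF hφs)
    refine ⟨![x], fun ψ hψ => ?_⟩
    exact himp ψ hψ x y z
      (fun φ hφ => hx φ (Finset.mem_biUnion.2 ⟨ψ, hψ, hφ⟩))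
      (fun φ hφ => hy φ (Finset.mem_biUnion.2 ⟨ψ, hψ, hφ⟩))
      (fun φ hφ => hz φ (Finset.mem_biUnion.2 ⟨ψ, hψ, hφ⟩)) hζ
  obtain ⟨c0, hc0⟩ := realizeT hsat Set.countable_empty hq1fs
  have hc0p : c0 ∈ typeSet (∅ : Set M) p := fun φ hφ => hc0 φ (Or.inl hφ)
  have hc0E : ∀ s : Finset (L.Formula (↥(∅ : Set M) ⊕ Fin 1)), ↑s ⊆ p →
      ∃ y z : M, (∀ φ ∈ s, φ.Realize (pval ![y])) ∧ (∀ φ ∈ s, φ.Realize (pval ![z])) ∧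
        ζ.Realize (pval ![c0, y, z]) := by
    intro s hs
    exact (hEs s c0).1 (hc0 (Es s) (Or.inr ⟨s, hs, rfl⟩))
  -- stage 2
  have hc0mem : c0 ∈ ({c0} : Set M) := rfl
  let Es' : Finset (L.Formula (↥(∅ : Set M) ⊕ Fin 1)) → L.Formula (↥({c0} : Set M) ⊕ Fin 1) :=
    fun s => iExsF
      (Sum.elim (Sum.inl ∘ Sum.inl) ![Sum.inl (Sum.inr 0), Sum.inr 0] :
        ↥({c0} : Set M) ⊕ Fin 2 → (↥({c0} : Set M) ⊕ Fin 1) ⊕ Fin 1)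
      ((sub1 (conjF s) (Sum.inr 1)) ⊓
        (sub3 ζ (Sum.inl ⟨c0, hc0mem⟩) (Sum.inr 0) (Sum.inr 1)))
  have hEs' : ∀ (s : Finset (L.Formula (↥(∅ : Set M) ⊕ Fin 1))) (y : M),
      (Es' s).Realize (pval ![y]) ↔
      ∃ z : M, (∀ φ ∈ s, φ.Realize (pval ![z])) ∧ ζ.Realize (pval ![c0, y, z]) := by
    intro s y
    rw [realize_iExsF]
    constructor
    · rintro ⟨i, hi⟩
      have hv : (fun a => Sum.elim (pval ![y]) i
          ((Sum.elim (Sum.inl ∘ Sum.inl) ![Sum.inl (Sum.inr 0), Sum.inr 0] :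
            ↥({c0} : Set M) ⊕ Fin 2 → (↥({c0} : Set M) ⊕ Fin 1) ⊕ Fin 1) a))
          = pval ![y, i 0] := by
        funext a
        rcases a with e | j
        · rfl
        · fin_cases j <;> rfl
      rw [hv, Formula.realize_inf, realize_sub1, realize_sub3] at hi
      refine ⟨i 0, fun φ hφ => ?_, ?_⟩
      · exact (realize_conjF (M := M)).1 (by simpa using hi.1) φ hφ
      · simpa using hi.2
    · rintro ⟨z, hz, hζ⟩
      refine ⟨![z], ?_⟩
      have hv : (fun a => Sum.elim (pval ![y]) ![z]
          ((Sum.elim (Sum.inl ∘ Sum.inl) ![Sum.inl (Sum.inr 0), Sum.inr 0] :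
            ↥({c0} : Set M) ⊕ Fin 2 → (↥({c0} : Set M) ⊕ Fin 1) ⊕ Fin 1) a))
          = pval ![y, z] := by
        funext a
        rcases a with e | j
        · rfl
        · fin_cases j <;> rfl
      rw [hv, Formula.realize_inf, realize_sub1, realize_sub3]
      constructor
      · simpa using (realize_conjF (M := M)).2 hz
      · simpa using hζ
  set q2 : Set (L.Formula (↥({c0} : Set M) ⊕ Fin 1)) :=
    ((fun δ => sub1 δ (Sum.inr 0)) '' p) ∪
      (Es' '' {s : Finset (L.Formula (↥(∅ : Set M) ⊕ Fin 1)) | ↑s ⊆ p}) with hq2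
  have hq2fs : FinSat ({c0} : Set M) q2 := by
    intro F hF
    have key : ∀ ψ ∈ F, ∃ s : Finset (L.Formula (↥(∅ : Set M) ⊕ Fin 1)), ↑s ⊆ p ∧
        ∀ y z : M, (∀ φ ∈ s, φ.Realize (pval ![y])) → (∀ φ ∈ s, φ.Realize (pval ![z])) →
          ζ.Realize (pval ![c0, y, z]) → ψ.Realize (pval ![y]) := by
      intro ψ hψ
      rcases hF hψ with ⟨δ, hδ, rfl⟩ | ⟨s, hs, rfl⟩
      · refine ⟨{δ}, by simpa using hδ, fun y z hy _ _ => ?_⟩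
        rw [realize_sub1]
        simpa using hy δ (by simp)
      · exact ⟨s, hs, fun y z hy hz hζ => (hEs' s y).2 ⟨z, hz, hζ⟩⟩
    choose! sψ hsub himp using key
    obtain ⟨y, z, hy, hz, hζ⟩ := hc0E (F.biUnion sψ) (by
      intro φ hφ
      simp only [Finset.coe_biUnion, Set.mem_iUnion, Finset.mem_coe] at hφ
      obtain ⟨ψ, hψF, hφs⟩ := hφ
      exact hsub ψ hψF hφs)
    refine ⟨![y], fun ψ hψ => ?_⟩
    exact himp ψ hψ y z
      (fun φ hφ => hy φ (Finset.mem_biUnion.2 ⟨ψ, hψ, hφ⟩))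
      (fun φ hφ => hz φ (Finset.mem_biUnion.2 ⟨ψ, hψ, hφ⟩)) hζ
  obtain ⟨c1, hc1⟩ := realizeT hsat (Set.countable_singleton c0) hq2fs
  have hc1p : c1 ∈ typeSet (∅ : Set M) p := by
    intro φ hφ
    have := hc1 (sub1 φ (Sum.inr 0)) (Or.inl ⟨φ, hφ, rfl⟩)
    rw [realize_sub1] at this
    simpa using this
  have hc1E : ∀ s : Finset (L.Formula (↥(∅ : Set M) ⊕ Fin 1)), ↑s ⊆ p →
      ∃ z : M, (∀ φ ∈ s, φ.Realize (pval ![z])) ∧ ζ.Realize (pval ![c0, c1, z]) := by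
    intro s hs
    exact (hEs' s c1).1 (hc1 (Es' s) (Or.inr ⟨s, hs, rfl⟩))
  -- stage 3
  have hc0mem2 : c0 ∈ ({c0, c1} : Set M) := Or.inl rfl
  have hc1mem2 : c1 ∈ ({c0, c1} : Set M) := Or.inr rfl
  set ζ'' : L.Formula (↥({c0, c1} : Set M) ⊕ Fin 1) :=
    sub3 ζ (Sum.inl ⟨c0, hc0mem2⟩) (Sum.inl ⟨c1, hc1mem2⟩) (Sum.inr 0) with hζ''
  have hζ''r : ∀ z : M, ζ''.Realize (pval ![z]) ↔ ζ.Realize (pval ![c0, c1, z]) := by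
    intro z
    rw [hζ'', realize_sub3]
    rfl
  set q3 : Set (L.Formula (↥({c0, c1} : Set M) ⊕ Fin 1)) :=
    ((fun δ => sub1 δ (Sum.inr 0)) '' p) ∪ {ζ''} with hq3
  have hq3fs : FinSat ({c0, c1} : Set M) q3 := by
    intro F hF
    have key : ∀ ψ ∈ F, ∃ s : Finset (L.Formula (↥(∅ : Set M) ⊕ Fin 1)), ↑s ⊆ p ∧
        ∀ z : M, (∀ φ ∈ s, φ.Realize (pval ![z])) → ζ.Realize (pval ![c0, c1, z]) →
          ψ.Realize (pval ![z]) := by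
      intro ψ hψ
      rcases hF hψ with ⟨δ, hδ, rfl⟩ | hψζ
      · refine ⟨{δ}, by simpa using hδ, fun z hz _ => ?_⟩
        rw [realize_sub1]
        simpa using hz δ (by simp)
      · rcases hψζ with rfl
        exact ⟨∅, by simp, fun z _ hζz => (hζ''r z).2 hζz⟩
    choose! sψ hsub himp using key
    obtain ⟨z, hz, hζz⟩ := hc1E (F.biUnion sψ) (by
      intro φ hφ
      simp only [Finset.coe_biUnion, Set.mem_iUnion, Finset.mem_coe] at hφ
      obtain ⟨ψ, hψF, hφs⟩ := hφ
      exact hsub ψ hψF hφs)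
    refine ⟨![z], fun ψ hψ => ?_⟩
    exact himp ψ hψ z (fun φ hφ => hz φ (Finset.mem_biUnion.2 ⟨ψ, hψ, hφ⟩)) hζz
  obtain ⟨c2, hc2⟩ := realizeT hsat ((Set.countable_singleton c1).insert c0) hq3fs
  refine ⟨c0, c1, c2, hc0p, hc1p, ?_, ?_⟩
  · intro φ hφ
    have := hc2 (sub1 φ (Sum.inr 0)) (Or.inl ⟨φ, hφ, rfl⟩)
    rw [realize_sub1] at this
    simpa using this
  · exact (hζ''r c2).1 (hc2 ζ'' (Or.inr rfl))
end Sat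

/-- Lemma 9. If `<_p` is a relatively ∅-definable discrete
linear order on `p(M)` with successor function `S_p`, then for every `a ∈ p(M)`
there is an infinite `{a}`-definable discrete linear order whose initial part is
`{S_pⁿ(a) : n ∈ ω}`. -/
theorem statement16 (L : FirstOrder.Language.{u, v}) (hL : L.card ≤ ℵ₀)
    (T : L.Theory) (hT : T.IsComplete)
    (M : Type w) [L.Structure M] (hMT : M ⊨ T) (hMinf : Infinite M)
    (hsat : IsAleph1Saturated L M)
    (p : Set (L.Formula (↥(∅ : Set M) ⊕ Fin 1)))
    (hcomp : IsCompleteType (∅ : Set M) p)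
    (φp : L.Formula (↥(∅ : Set M) ⊕ Fin 2))
    (rp : M → M → Prop)
    (hrp : rp = fun a b => a ∈ typeSet (∅ : Set M) p ∧ b ∈ typeSet (∅ : Set M) p ∧
      defRel (∅ : Set M) φp a b)
    (hlin : IsLinearOn rp (typeSet (∅ : Set M) p))
    (hdisc : IsDiscreteOn rp (typeSet (∅ : Set M) p))
    (Sp : M → M)
    (hSp : ∀ a ∈ typeSet (∅ : Set M) p, SuccIn rp (typeSet (∅ : Set M) p) a (Sp a)) :
    ∀ a ∈ typeSet (∅ : Set M) p,
      ∃ (δ₀ : L.Formula (↥({a} : Set M) ⊕ Fin 1)) (lt₀ : L.Formula (↥({a} : Set M) ⊕ Fin 2)),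
        (defSet ({a} : Set M) δ₀).Infinite ∧
        IsLinearOn (gRel ({a} : Set M) δ₀ lt₀) (defSet ({a} : Set M) δ₀) ∧
        IsDiscreteOn (gRel ({a} : Set M) δ₀ lt₀) (defSet ({a} : Set M) δ₀) ∧
        IsInitialPart (gRel ({a} : Set M) δ₀ lt₀) (defSet ({a} : Set M) δ₀)
          {x : M | ∃ n : ℕ, Sp^[n] a = x} ∧
        (∀ m n : ℕ, m < n → gRel ({a} : Set M) δ₀ lt₀ (Sp^[m] a) (Sp^[n] a)) := by
  classical
  intro a ha
  set P := typeSet (∅ : Set M) p with hP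
  -- basic facts about rp on P
  have hrpdef : ∀ x y : M, rp x y ↔ (x ∈ P ∧ y ∈ P ∧ φp.Realize (pval ![x, y])) := by
    intro x y; rw [hrp]; rfl
  have hirr : ∀ x ∈ P, ¬ rp x x := hlin.1
  have htr : ∀ x ∈ P, ∀ y ∈ P, ∀ z ∈ P, rp x y → rp y z → rp x z := hlin.2.1
  have htot : ∀ x ∈ P, ∀ y ∈ P, x = y ∨ rp x y ∨ rp y x := hlin.2.2
  have hasym : ∀ x ∈ P, ∀ y ∈ P, rp x y → ¬ rp y x := by
    intro x hx y hy hxy hyx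
    exact hirr x hx (htr x hx y hy x hx hxy hyx)
  -- the sequence c n = Sp^[n] a
  set c : ℕ → M := fun n => Sp^[n] a with hc
  have hc0 : c 0 = a := rfl
  have hcsucc : ∀ n, c (n + 1) = Sp (c n) := by
    intro n; simp [hc, Function.iterate_succ_apply']
  have hcP : ∀ n, c n ∈ P := by
    intro n; induction n with
    | zero => exact ha
    | succ n ih => rw [hcsucc]; exact (hSp (c n) ih).2.1
  have hcstep : ∀ n, rp (c n) (c (n + 1)) := by
    intro n; rw [hcsucc]; exact (hSp (c n) (hcP n)).2.2.1
  have hcmono : ∀ m n, m < n → rp (c m) (c n) := by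
    intro m n hmn
    induction n with
    | zero => omega
    | succ n ih =>
      rcases Nat.lt_succ_iff_lt_or_eq.1 hmn with h | h
      · exact htr (c m) (hcP m) (c n) (hcP n) (c (n+1)) (hcP (n+1)) (ih h) (hcstep n)
      · rw [h]; exact hcstep n
  have hcsuccmin : ∀ n, ∀ d ∈ P, rp (c n) d → d = c (n + 1) ∨ rp (c (n + 1)) d := by
    intro n d hd hrd
    have := (hSp (c n) (hcP n)).2.2.2 d hd hrd
    rw [hcsucc]; exact this
  -- notation for satisfaction of finite sets
  have satmono : ∀ (s t : Finset (L.Formula (↥(∅ : Set M) ⊕ Fin 1))), s ⊆ t →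
      ∀ x : M, (∀ φ ∈ t, φ.Realize (pval ![x])) → (∀ φ ∈ s, φ.Realize (pval ![x])) :=
    fun s t hst x hx φ hφ => hx φ (hst hφ)
  have satP : ∀ (s : Finset (L.Formula (↥(∅ : Set M) ⊕ Fin 1))), ↑s ⊆ p →
      ∀ x ∈ P, (∀ φ ∈ s, φ.Realize (pval ![x])) :=
    fun s hs x hx φ hφ => hx φ (hs hφ)
  -- Step: irreflexivity on a definable superset
  have step_irr : ∃ s : Finset (L.Formula (↥(∅ : Set M) ⊕ Fin 1)), ↑s ⊆ p ∧
      ∀ x : M, (∀ φ ∈ s, φ.Realize (pval ![x])) → ¬ φp.Realize (pval ![x, x]) := by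
    by_contra hcon
    push_neg at hcon
    set diag : L.Formula (↥(∅ : Set M) ⊕ Fin 1) := sub2 φp (Sum.inr 0) (Sum.inr 0) with hdiag
    have hq : FinSat (∅ : Set M) (p ∪ {diag}) := by
      intro F hF
      obtain ⟨x, hx, hxx⟩ := hcon (F.filter (· ∈ p)) (by
        intro φ hφ
        simp only [Finset.coe_filter, Set.mem_setOf_eq] at hφ
        exact hφ.2)
      refine ⟨![x], fun ψ hψ => ?_⟩
      rcases hF hψ with hψp | hψd
      · exact hx ψ (Finset.mem_filter.2 ⟨hψ, hψp⟩)
      · rcases hψd with rfl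
        rw [realize_sub2]
        simpa using hxx
    obtain ⟨x, hx⟩ := realizeT hsat Set.countable_empty hq
    have hxP : x ∈ P := fun φ hφ => hx φ (Or.inl hφ)
    have := hx diag (Or.inr rfl)
    rw [realize_sub2] at this
    exact hirr x hxP ((hrpdef x x).2 ⟨hxP, hxP, by simpa using this⟩)
  -- Step: totality on a definable superset
  have step_tot : ∃ s : Finset (L.Formula (↥(∅ : Set M) ⊕ Fin 1)), ↑s ⊆ p ∧
      ∀ x y : M, (∀ φ ∈ s, φ.Realize (pval ![x])) → (∀ φ ∈ s, φ.Realize (pval ![y])) →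
        (x = y ∨ φp.Realize (pval ![x, y]) ∨ φp.Realize (pval ![y, x])) := by
    by_contra hcon
    push_neg at hcon
    set ζ : L.Formula (↥(∅ : Set M) ⊕ Fin 2) :=
      ((eqF (Sum.inr 0) (Sum.inr 1)).not) ⊓ ((sub2 φp (Sum.inr 0) (Sum.inr 1)).not) ⊓
        ((sub2 φp (Sum.inr 1) (Sum.inr 0)).not) with hζ
    have hζr : ∀ x y : M, ζ.Realize (pval ![x, y]) ↔
        (¬ x = y ∧ ¬ φp.Realize (pval ![x, y]) ∧ ¬ φp.Realize (pval ![y, x])) := by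
      intro x y
      rw [hζ, Formula.realize_inf, Formula.realize_inf, Formula.realize_not,
        Formula.realize_not, Formula.realize_not, realize_eqF, realize_sub2, realize_sub2]
      constructor
      · rintro ⟨⟨h1, h2⟩, h3⟩
        exact ⟨by simpa using h1, by simpa using h2, by simpa using h3⟩
      · rintro ⟨h1, h2, h3⟩
        exact ⟨⟨by simpa using h1, by simpa using h2⟩, by simpa using h3⟩
    obtain ⟨x, y, hxP, hyP, hxy⟩ := pairP hsat ζ (by
      intro s hs
      obtain ⟨x, y, hx, hy, hne⟩ := hcon s hs
      exact ⟨x, y, hx, hy, (hζr x y).2 ⟨hne.1, hne.2.1, hne.2.2⟩⟩)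
    rw [hζr] at hxy
    rcases htot x hxP y hyP with h | h | h
    · exact hxy.1 h
    · exact hxy.2.1 ((hrpdef x y).1 h).2.2
    · exact hxy.2.2 ((hrpdef y x).1 h).2.2
  -- Step: transitivity on a definable superset
  have step_tr : ∃ s : Finset (L.Formula (↥(∅ : Set M) ⊕ Fin 1)), ↑s ⊆ p ∧
      ∀ x y z : M, (∀ φ ∈ s, φ.Realize (pval ![x])) → (∀ φ ∈ s, φ.Realize (pval ![y])) →
        (∀ φ ∈ s, φ.Realize (pval ![z])) →
        φp.Realize (pval ![x, y]) → φp.Realize (pval ![y, z]) →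
        φp.Realize (pval ![x, z]) := by
    by_contra hcon
    push_neg at hcon
    set ζ : L.Formula (↥(∅ : Set M) ⊕ Fin 3) :=
      (sub2 φp (Sum.inr 0) (Sum.inr 1)) ⊓ (sub2 φp (Sum.inr 1) (Sum.inr 2)) ⊓
        ((sub2 φp (Sum.inr 0) (Sum.inr 2)).not) with hζ
    have hζr : ∀ x y z : M, ζ.Realize (pval ![x, y, z]) ↔
        (φp.Realize (pval ![x, y]) ∧ φp.Realize (pval ![y, z]) ∧
          ¬ φp.Realize (pval ![x, z])) := by
      intro x y z
      rw [hζ, Formula.realize_inf, Formula.realize_inf, Formula.realize_not,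
        realize_sub2, realize_sub2, realize_sub2]
      constructor
      · rintro ⟨⟨h1, h2⟩, h3⟩
        exact ⟨by simpa using h1, by simpa using h2, by simpa using h3⟩
      · rintro ⟨h1, h2, h3⟩
        exact ⟨⟨by simpa using h1, by simpa using h2⟩, by simpa using h3⟩
    obtain ⟨x, y, z, hxP, hyP, hzP, hxyz⟩ := tripleP hsat ζ (by
      intro s hs
      obtain ⟨x, y, z, hx, hy, hz, h1, h2, h3⟩ := hcon s hs
      exact ⟨x, y, z, hx, hy, hz, (hζr x y z).2 ⟨h1, h2, h3⟩⟩)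
    rw [hζr] at hxyz
    have h1 : rp x y := (hrpdef x y).2 ⟨hxP, hyP, hxyz.1⟩
    have h2 : rp y z := (hrpdef y z).2 ⟨hyP, hzP, hxyz.2.1⟩
    exact hxyz.2.2 ((hrpdef x z).1 (htr x hxP y hyP z hzP h1 h2)).2.2
  -- Step: the interval (a, Sp a) misses a definable superset
  have step_int : ∃ s : Finset (L.Formula (↥(∅ : Set M) ⊕ Fin 1)), ↑s ⊆ p ∧
      ∀ d : M, (∀ φ ∈ s, φ.Realize (pval ![d])) →
        ¬ (φp.Realize (pval ![a, d]) ∧ φp.Realize (pval ![d, Sp a])) := by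
    by_contra hcon
    push_neg at hcon
    have haA : a ∈ ({a, Sp a} : Set M) := Or.inl rfl
    have hsA : Sp a ∈ ({a, Sp a} : Set M) := Or.inr rfl
    set ζ : L.Formula (↥({a, Sp a} : Set M) ⊕ Fin 1) :=
      (sub2 φp (Sum.inl ⟨a, haA⟩) (Sum.inr 0)) ⊓
        (sub2 φp (Sum.inr 0) (Sum.inl ⟨Sp a, hsA⟩)) with hζ
    have hζr : ∀ d : M, ζ.Realize (pval ![d]) ↔
        (φp.Realize (pval ![a, d]) ∧ φp.Realize (pval ![d, Sp a])) := by
      intro d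
      rw [hζ, Formula.realize_inf, realize_sub2, realize_sub2]
      rfl
    have hq : FinSat ({a, Sp a} : Set M)
        (((fun δ => sub1 δ (Sum.inr 0)) '' p) ∪ {ζ}) := by
      intro F hF
      have key : ∀ ψ ∈ F, ∃ s : Finset (L.Formula (↥(∅ : Set M) ⊕ Fin 1)), ↑s ⊆ p ∧
          ∀ d : M, (∀ φ ∈ s, φ.Realize (pval ![d])) →
            (φp.Realize (pval ![a, d]) ∧ φp.Realize (pval ![d, Sp a])) →
            ψ.Realize (pval ![d]) := by
        intro ψ hψ
        rcases hF hψ with ⟨δ, hδ, rfl⟩ | hψζ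
        · refine ⟨{δ}, by simpa using hδ, fun d hd _ => ?_⟩
          rw [realize_sub1]
          simpa using hd δ (by simp)
        · rcases hψζ with rfl
          exact ⟨∅, by simp, fun d _ hint => (hζr d).2 hint⟩
      choose! sψ hsub himp using key
      obtain ⟨d, hd, h1, h2⟩ := hcon (F.biUnion sψ) (by
        intro φ hφ
        simp only [Finset.coe_biUnion, Set.mem_iUnion, Finset.mem_coe] at hφ
        obtain ⟨ψ, hψF, hφs⟩ := hφ
        exact hsub ψ hψF hφs)
      refine ⟨![d], fun ψ hψ => ?_⟩
      exact himp ψ hψ d (fun φ hφ => hd φ (Finset.mem_biUnion.2 ⟨ψ, hψ, hφ⟩)) ⟨h1, h2⟩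
    obtain ⟨d, hd⟩ := realizeT hsat ((Set.countable_singleton (Sp a)).insert a) hq
    have hdP : d ∈ P := by
      intro φ hφ
      have := hd (sub1 φ (Sum.inr 0)) (Or.inl ⟨φ, hφ, rfl⟩)
      rw [realize_sub1] at this
      simpa using this
    have hint := (hζr d).1 (hd ζ (Or.inr rfl))
    have h1 : rp a d := (hrpdef a d).2 ⟨ha, hdP, hint.1⟩
    have h2 : rp d (Sp a) := (hrpdef d (Sp a)).2 ⟨hdP, (hSp a ha).2.1, hint.2⟩
    rcases (hSp a ha).2.2.2 d hdP h1 with h | h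
    · rw [h] at h2
      exact hirr (Sp a) (hSp a ha).2.1 h2
    · exact hasym (Sp a) (hSp a ha).2.1 d hdP h h2
  -- combine into one finite conjunction
  obtain ⟨s1, hs1p, hs1⟩ := step_irr
  obtain ⟨s2, hs2p, hs2⟩ := step_tot
  obtain ⟨s3, hs3p, hs3⟩ := step_tr
  obtain ⟨s4, hs4p, hs4⟩ := step_int
  set sA : Finset (L.Formula (↥(∅ : Set M) ⊕ Fin 1)) := s1 ∪ s2 ∪ s3 ∪ s4 with hsA
  have hsAp : ↑sA ⊆ p := by
    rw [hsA]
    push_cast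
    intro φ hφ
    simp only [Set.mem_union] at hφ
    rcases hφ with ((h | h) | h) | h
    · exact hs1p h
    · exact hs2p h
    · exact hs3p h
    · exact hs4p h
  set δs : L.Formula (↥(∅ : Set M) ⊕ Fin 1) := conjF sA with hδs
  set Dm : M → Prop := fun x => δs.Realize (pval ![x]) with hDm
  set lt : M → M → Prop := fun x y => φp.Realize (pval ![x, y]) with hltdef
  have hDmem : ∀ x : M, Dm x ↔ ∀ φ ∈ sA, φ.Realize (pval ![x]) := by
    intro x; rw [hDm]; exact realize_conjF
  have hPD : ∀ x ∈ P, Dm x := fun x hx => (hDmem x).2 (satP sA hsAp x hx)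
  have hsub1A : ∀ x : M, Dm x → ∀ φ ∈ s1, φ.Realize (pval ![x]) := by
    intro x hx
    exact satmono s1 sA (by rw [hsA]; intro φ h; simp [Finset.mem_union]; tauto) x ((hDmem x).1 hx)
  have hsub2A : ∀ x : M, Dm x → ∀ φ ∈ s2, φ.Realize (pval ![x]) := by
    intro x hx
    exact satmono s2 sA (by rw [hsA]; intro φ h; simp [Finset.mem_union]; tauto) x ((hDmem x).1 hx)
  have hsub3A : ∀ x : M, Dm x → ∀ φ ∈ s3, φ.Realize (pval ![x]) := by
    intro x hx
    exact satmono s3 sA (by rw [hsA]; intro φ h; simp [Finset.mem_union]; tauto) x ((hDmem x).1 hx)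
  have hsub4A : ∀ x : M, Dm x → ∀ φ ∈ s4, φ.Realize (pval ![x]) := by
    intro x hx
    exact satmono s4 sA (by rw [hsA]; intro φ h; simp [Finset.mem_union]; tauto) x ((hDmem x).1 hx)
  -- order properties on Dm
  have Dirr : ∀ x, Dm x → ¬ lt x x := fun x hx => hs1 x (hsub1A x hx)
  have Dtot : ∀ x y, Dm x → Dm y → x = y ∨ lt x y ∨ lt y x :=
    fun x y hx hy => hs2 x y (hsub2A x hx) (hsub2A y hy)
  have Dtr : ∀ x y z, Dm x → Dm y → Dm z → lt x y → lt y z → lt x z :=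
    fun x y z hx hy hz => hs3 x y z (hsub3A x hx) (hsub3A y hy) (hsub3A z hz)
  have Dasym : ∀ x y, Dm x → Dm y → lt x y → ¬ lt y x := by
    intro x y hx hy h1 h2
    exact Dirr x hx (Dtr x y x hx hy hx h1 h2)
  have Dint : ∀ d, Dm d → ¬ (lt a d ∧ lt d (Sp a)) := fun d hd => hs4 d (hsub4A d hd)
  have hltrp : ∀ x y, rp x y → lt x y := fun x y h => ((hrpdef x y).1 h).2.2
  -- the successor formula χ
  set χ : L.Formula (↥(∅ : Set M) ⊕ Fin 2) :=
    (sub2 φp (Sum.inr 0) (Sum.inr 1)) ⊓ (sub1 δs (Sum.inr 1)) ⊓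
      (iExsF
        (Sum.elim (Sum.inl ∘ Sum.inl) ![Sum.inl (Sum.inr 0), Sum.inl (Sum.inr 1), Sum.inr 0] :
          ↥(∅ : Set M) ⊕ Fin 3 → (↥(∅ : Set M) ⊕ Fin 2) ⊕ Fin 1)
        ((sub1 δs (Sum.inr 2)) ⊓ (sub2 φp (Sum.inr 0) (Sum.inr 2)) ⊓
          (sub2 φp (Sum.inr 2) (Sum.inr 1)))).not with hχ
  have hχr : ∀ x y : M, χ.Realize (pval ![x, y]) ↔
      (lt x y ∧ Dm y ∧ ¬ ∃ z, Dm z ∧ lt x z ∧ lt z y) := by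
    intro x y
    rw [hχ, Formula.realize_inf, Formula.realize_inf, Formula.realize_not,
      realize_sub2, realize_sub1, realize_iExsF]
    constructor
    · rintro ⟨⟨h1, h2⟩, h3⟩
      refine ⟨by simpa using h1, by simpa using h2, ?_⟩
      rintro ⟨z, hz1, hz2, hz3⟩
      apply h3
      refine ⟨![z], ?_⟩
      have hv : (fun b => Sum.elim (pval ![x, y]) ![z]
          ((Sum.elim (Sum.inl ∘ Sum.inl)
            ![Sum.inl (Sum.inr 0), Sum.inl (Sum.inr 1), Sum.inr 0] :
            ↥(∅ : Set M) ⊕ Fin 3 → (↥(∅ : Set M) ⊕ Fin 2) ⊕ Fin 1) b))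
          = pval ![x, y, z] := by
        funext b
        rcases b with e | j
        · rfl
        · fin_cases j <;> rfl
      rw [hv, Formula.realize_inf, Formula.realize_inf, realize_sub1, realize_sub2,
        realize_sub2]
      exact ⟨⟨by simpa using hz1, by simpa using hz2⟩, by simpa using hz3⟩
    · rintro ⟨h1, h2, h3⟩
      refine ⟨⟨by simpa using h1, by simpa using h2⟩, ?_⟩
      rintro ⟨i, hi⟩
      have hv : (fun b => Sum.elim (pval ![x, y]) i
          ((Sum.elim (Sum.inl ∘ Sum.inl)
            ![Sum.inl (Sum.inr 0), Sum.inl (Sum.inr 1), Sum.inr 0] :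
            ↥(∅ : Set M) ⊕ Fin 3 → (↥(∅ : Set M) ⊕ Fin 2) ⊕ Fin 1) b))
          = pval ![x, y, i 0] := by
        funext b
        rcases b with e | j
        · rfl
        · fin_cases j <;> rfl
      rw [hv, Formula.realize_inf, Formula.realize_inf, realize_sub1, realize_sub2,
        realize_sub2] at hi
      exact h3 ⟨i 0, by simpa using hi.1.1, by simpa using hi.1.2, by simpa using hi.2⟩
  -- χ(a, Sp a)
  have hSpP : Sp a ∈ P := (hSp a ha).2.1
  have hχa : χ.Realize (pval ![a, Sp a]) := by
    rw [hχr]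
    refine ⟨hltrp a (Sp a) (hSp a ha).2.2.1, hPD (Sp a) hSpP, ?_⟩
    rintro ⟨z, hz1, hz2, hz3⟩
    exact Dint z hz1 ⟨hz2, hz3⟩
  -- every formula true at a is in p
  have tpa : ∀ θ : L.Formula (↥(∅ : Set M) ⊕ Fin 1), θ.Realize (pval ![a]) → θ ∈ p := by
    intro θ hθ
    rcases hcomp.2 θ with h | h
    · exact h
    · exact absurd (ha _ h) (by
        intro hcon
        have : ¬ θ.Realize (pval ![a]) := by
          have h2 : (BoundedFormula.not θ).Realize (pval ![a]) (default : Fin 0 → M) := hcon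
          rw [BoundedFormula.realize_not] at h2
          exact h2
        exact this hθ)
  -- ψ = ∃ y, χ(x, y) holds of a, hence is in p
  set fex : ↥(∅ : Set M) ⊕ Fin 2 → (↥(∅ : Set M) ⊕ Fin 1) ⊕ Fin 1 :=
    Sum.elim (Sum.inl ∘ Sum.inl) ![Sum.inl (Sum.inr 0), Sum.inr 0] with hfex
  have hvfex : ∀ (x : M) (i : Fin 1 → M),
      (fun b => Sum.elim (pval ![x]) i (fex b)) = pval ![x, i 0] := by
    intro x i
    funext b
    rcases b with e | j
    · rfl
    · fin_cases j <;> rfl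
  set ψ : L.Formula (↥(∅ : Set M) ⊕ Fin 1) := iExsF fex χ with hψ
  have hψr : ∀ x : M, ψ.Realize (pval ![x]) ↔ ∃ y : M, χ.Realize (pval ![x, y]) := by
    intro x
    rw [hψ, realize_iExsF]
    constructor
    · rintro ⟨i, hi⟩
      rw [hvfex x i] at hi
      exact ⟨i 0, hi⟩
    · rintro ⟨y, hy⟩
      refine ⟨![y], ?_⟩
      have hv := hvfex x ![y]
      rw [hv]
      exact hy
  have hψp : ψ ∈ p := tpa ψ ((hψr a).2 ⟨Sp a, hχa⟩)
  -- for each η ∈ p, ∀ y (χ(x,y) → η(y)) is in p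
  have hρp : ∀ η ∈ p, (iAllsF fex (χ.imp (sub1 η (Sum.inr 1)))) ∈ p := by
    intro η hη
    apply tpa
    rw [realize_iAllsF]
    intro i
    rw [hvfex a i, Formula.realize_imp, realize_sub1]
    intro hχay
    rw [hχr] at hχay
    obtain ⟨h1, h2, h3⟩ := hχay
    -- i 0 must equal Sp a
    have hia : i 0 = Sp a := by
      rcases Dtot (i 0) (Sp a) h2 (hPD (Sp a) hSpP) with h | h | h
      · exact h
      · exfalso
        have hχa2 := hχa
        rw [hχr] at hχa2
        exact hχa2.2.2 ⟨i 0, h2, h1, h⟩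
      · exfalso
        exact h3 ⟨Sp a, hPD (Sp a) hSpP, hltrp a (Sp a) (hSp a ha).2.2.1, h⟩
    have : η.Realize (pval ![i 0]) := by
      rw [hia]
      exact hSpP η hη
    simpa using this
  -- each c n has a χ-successor, which must be c (n+1); extract the gap property
  have hgap : ∀ n, ∀ z, Dm z → lt (c n) z → lt z (c (n + 1)) → False := by
    intro n
    have h1 : ψ.Realize (pval ![c n]) := hcP n ψ hψp
    rw [hψr] at h1
    obtain ⟨y, hy⟩ := h1
    have hyP : y ∈ P := by
      intro η hη
      have h2 := hcP n _ (hρp η hη)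
      rw [realize_iAllsF] at h2
      have h3 := h2 ![y]
      rw [hvfex (c n) ![y], Formula.realize_imp, realize_sub1] at h3
      simpa using h3 hy
    rw [hχr] at hy
    obtain ⟨hy1, hy2, hy3⟩ := hy
    have hrny : rp (c n) y := (hrpdef (c n) y).2 ⟨hcP n, hyP, hy1⟩
    have hyc : y = c (n + 1) := by
      rcases hcsuccmin n y hyP hrny with h | h
      · exact h
      · exact absurd h (by
          intro hcon
          exact hy3 ⟨c (n + 1), hPD (c (n + 1)) (hcP (n + 1)),
            hltrp (c n) (c (n + 1)) (hcstep n), hltrp (c (n + 1)) y hcon⟩)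
    intro z hz1 hz2 hz3
    exact (hyc ▸ hy3) ⟨z, hz1, hz2, hz3⟩
  -- Prop-level development of the definable discrete order
  have hltc : ∀ m n, m < n → lt (c m) (c n) := fun m n h => hltrp _ _ (hcmono m n h)
  have hDa : Dm a := hPD a ha
  have hDc : ∀ n, Dm (c n) := fun n => hPD (c n) (hcP n)
  have hcinj : Function.Injective c := by
    intro m n hmn
    by_contra hne
    rcases Nat.lt_or_ge m n with h | h
    · exact Dirr (c n) (hDc n) (hmn ▸ hltc m n h)
    · have : m > n := by omega
      exact Dirr (c m) (hDc m) (hmn ▸ hltc n m this)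
  set ImmS : M → Prop := fun u => ∃ w, Dm w ∧ lt u w ∧
    ∀ z, Dm z → lt u z → z = w ∨ lt w z with hImmS
  set ImmP : M → Prop := fun v => ∃ w, Dm w ∧ lt w v ∧
    ∀ z, Dm z → lt z v → z = w ∨ lt z w with hImmP
  set InD : M → Prop := fun x => Dm x ∧ (a = x ∨ lt a x) ∧
    (∀ u, Dm u → (a = u ∨ lt a u) → lt u x → ImmS u) ∧
    (∀ v, Dm v → lt a v → (v = x ∨ lt v x) → ImmP v) with hInD
  -- elements below some c n are exactly earlier c k
  have hbelow : ∀ n u, Dm u → (a = u ∨ lt a u) → lt u (c n) → ∃ k, k < n ∧ u = c k := by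
    intro n
    induction n with
    | zero =>
      intro u hu hau hua
      exfalso
      rcases hau with h | h
      · exact Dirr u hu (h ▸ hua)
      · exact Dasym a u hDa hu h hua
    | succ n ih =>
      intro u hu hau huc
      rcases Dtot u (c n) hu (hDc n) with h | h | h
      · exact ⟨n, by omega, h⟩
      · obtain ⟨k, hk, hk2⟩ := ih u hu hau h
        exact ⟨k, by omega, hk2⟩
      · exact absurd (hgap n u hu h huc) (fun h => h)
  have ImmSc : ∀ k, ImmS (c k) := by
    intro k
    refine ⟨c (k + 1), hDc (k + 1), hltc k (k + 1) (by omega), ?_⟩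
    intro z hz hlz
    rcases Dtot z (c (k + 1)) hz (hDc (k + 1)) with h | h | h
    · exact Or.inl h
    · exact absurd (hgap k z hz hlz h) (fun h => h)
    · exact Or.inr h
  have ImmPc : ∀ k, ImmP (c (k + 1)) := by
    intro k
    refine ⟨c k, hDc k, hltc k (k + 1) (by omega), ?_⟩
    intro z hz hlz
    rcases Dtot z (c k) hz (hDc k) with h | h | h
    · exact Or.inl h
    · exact Or.inr h
    · exact absurd (hgap k z hz h hlz) (fun h => h)
  have hcd : ∀ n, InD (c n) := by
    intro n
    refine ⟨hDc n, ?_, ?_, ?_⟩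
    · rcases Nat.eq_zero_or_pos n with h | h
      · exact Or.inl (by rw [h, hc0])
      · exact Or.inr (hc0 ▸ hltc 0 n h)
    · intro u hu hau huc
      obtain ⟨k, _, rfl⟩ := hbelow n u hu hau huc
      exact ImmSc k
    · intro v hv hav hvc
      rcases hvc with rfl | hlt
      · rcases Nat.exists_eq_add_of_lt (show 0 < n by
          rcases Nat.eq_zero_or_pos n with h | h
          · exfalso; rw [h, hc0] at hav; exact Dirr a hDa hav
          · exact h) with ⟨m, hm⟩
        have : n = m + 1 := by omega
        rw [this]
        exact ImmPc m
      · obtain ⟨k, _, rfl⟩ := hbelow n v hv (Or.inr hav) hlt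
        rcases Nat.eq_zero_or_pos k with h | h
        · exfalso; rw [h, hc0] at hav; exact Dirr a hDa hav
        · obtain ⟨m, hm⟩ := Nat.exists_eq_add_of_lt h
          have : k = m + 1 := by omega
          rw [this]
          exact ImmPc m
  have hInDa : InD a := hc0 ▸ hcd 0
  -- linearity-type facts restricted to InD
  have hInDm : ∀ x, InD x → Dm x := fun x hx => hx.1
  -- successor step inside InD
  have hsuccInD : ∀ x b, InD x → InD b → lt x b →
      ∃ w, InD w ∧ lt x w ∧ ∀ z, InD z → lt x z → z = w ∨ lt w z := by
    intro x b hx hb hxb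
    obtain ⟨w, hwD, hxw, hwmin⟩ := hb.2.2.1 x hx.1 hx.2.1 hxb
    have hInDw : InD w := by
      refine ⟨hwD, ?_, ?_, ?_⟩
      · rcases hx.2.1 with h | h
        · exact Or.inr (h ▸ hxw)
        · exact Or.inr (Dtr a x w hDa hx.1 hwD h hxw)
      · intro u hu hau huw
        rcases Dtot u x hu hx.1 with h | h | h
        · exact h ▸ ⟨w, hwD, hxw, hwmin⟩
        · exact hx.2.2.1 u hu hau h
        · rcases hwmin u hu h with h2 | h2
          · exact absurd (h2 ▸ huw) (Dirr w hwD)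
          · exact absurd huw (Dasym w u hwD hu h2)
      · intro v hv hav hvw
        rcases hvw with rfl | hlt
        · refine ⟨x, hx.1, hxw, ?_⟩
          intro z hz hzv
          rcases Dtot z x hz hx.1 with h | h | h
          · exact Or.inl h
          · exact Or.inr h
          · rcases hwmin z hz h with h2 | h2
            · exact absurd (h2 ▸ hzv) (Dirr v hv)
            · exact absurd hzv (Dasym v z hv hz h2)
        · rcases Dtot v x hv hx.1 with h | h | h
          · exact hx.2.2.2 v hv hav (Or.inl h)
          · exact hx.2.2.2 v hv hav (Or.inr h)
          · rcases hwmin v hv h with h2 | h2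
            · exact absurd (h2 ▸ hlt) (Dirr w hwD)
            · exact absurd hlt (Dasym w v hwD hv h2)
    refine ⟨w, hInDw, hxw, ?_⟩
    intro z hz hxz
    exact hwmin z (hInDm z hz) hxz
  -- predecessor step inside InD
  have hpredInD : ∀ x b, InD x → InD b → lt b x →
      ∃ w, InD w ∧ lt w x ∧ ∀ z, InD z → lt z x → z = w ∨ lt z w := by
    intro x b hx hb hbx
    have hax : lt a x := by
      rcases hb.2.1 with h | h
      · exact h ▸ hbx
      · exact Dtr a b x hDa hb.1 hx.1 h hbx
    obtain ⟨w, hwD, hwx, hwmax⟩ := hx.2.2.2 x hx.1 hax (Or.inl rfl)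
    have haw : a = w ∨ lt a w := by
      rcases Dtot a w hDa hwD with h | h | h
      · exact Or.inl h
      · exact Or.inr h
      · exfalso
        rcases hwmax b hb.1 hbx with h2 | h2
        · rcases hb.2.1 with h3 | h3
          · have hwa : w = a := by rw [← h2, ← h3]
            rw [hwa] at h
            exact Dirr a hDa h
          · have hwb : w = b := h2.symm
            rw [hwb] at h
            exact Dasym a b hDa hb.1 h3 h
        · have hba : lt b a := Dtr b w a hb.1 hwD hDa h2 h
          rcases hb.2.1 with h3 | h3
          · exact Dirr a hDa (h3 ▸ hba)
          · exact Dasym a b hDa hb.1 h3 hba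
    have hInDw : InD w := by
      refine ⟨hwD, haw, ?_, ?_⟩
      · intro u hu hau huw
        exact hx.2.2.1 u hu hau (Dtr u w x hu hwD hx.1 huw hwx)
      · intro v hv hav hvw
        have hvx : lt v x := by
          rcases hvw with rfl | h
          · exact hwx
          · exact Dtr v w x hv hwD hx.1 h hwx
        exact hx.2.2.2 v hv hav (Or.inr hvx)
    refine ⟨w, hInDw, hwx, ?_⟩
    intro z hz hzx
    exact hwmax z (hInDm z hz) hzx
  -- construction of the formulas δ₀ and lt₀ over the parameter set {a}
  have haA : a ∈ ({a} : Set M) := rfl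
  set pa7 : ↥({a} : Set M) ⊕ Fin 7 := Sum.inl ⟨a, haA⟩ with hpa7
  set Big : L.Formula (↥({a} : Set M) ⊕ Fin 7) :=
    ((((sub1 δs (Sum.inr 1)) ⊓ ((eqF pa7 (Sum.inr 1)) ⊔ (sub2 φp pa7 (Sum.inr 1)))) ⊓
        (sub2 φp (Sum.inr 1) (Sum.inr 0))).imp
      (((sub1 δs (Sum.inr 3)) ⊓ (sub2 φp (Sum.inr 1) (Sum.inr 3))) ⊓
        (((sub1 δs (Sum.inr 5)) ⊓ (sub2 φp (Sum.inr 1) (Sum.inr 5))).imp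
          ((eqF (Sum.inr 5) (Sum.inr 3)) ⊔ (sub2 φp (Sum.inr 3) (Sum.inr 5)))))) ⊓
    ((((sub1 δs (Sum.inr 2)) ⊓ (sub2 φp pa7 (Sum.inr 2))) ⊓
        ((eqF (Sum.inr 2) (Sum.inr 0)) ⊔ (sub2 φp (Sum.inr 2) (Sum.inr 0)))).imp
      (((sub1 δs (Sum.inr 4)) ⊓ (sub2 φp (Sum.inr 4) (Sum.inr 2))) ⊓
        (((sub1 δs (Sum.inr 6)) ⊓ (sub2 φp (Sum.inr 6) (Sum.inr 2))).imp
          ((eqF (Sum.inr 6) (Sum.inr 4)) ⊔ (sub2 φp (Sum.inr 6) (Sum.inr 4)))))) with hBigdef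
  have hBig : ∀ x u v w w' z z' : M, Big.Realize (pval ![x, u, v, w, w', z, z']) ↔
      ((((Dm u ∧ (a = u ∨ lt a u)) ∧ lt u x) →
        ((Dm w ∧ lt u w) ∧ ((Dm z ∧ lt u z) → (z = w ∨ lt w z)))) ∧
      (((Dm v ∧ lt a v) ∧ (v = x ∨ lt v x)) →
        ((Dm w' ∧ lt w' v) ∧ ((Dm z' ∧ lt z' v) → (z' = w' ∨ lt z' w'))))) := by
    intro x u v w w' z z'
    rw [hBigdef]
    simp only [Formula.realize_inf, Formula.realize_imp, Formula.realize_sup,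
      realize_sub1, realize_sub2, realize_eqF]
    exact Iff.rfl
  set g32 : Fin 7 → (↥({a} : Set M) ⊕ Fin 5) ⊕ Fin 2 :=
    ![Sum.inl (Sum.inr 0), Sum.inl (Sum.inr 1), Sum.inl (Sum.inr 2), Sum.inl (Sum.inr 3),
      Sum.inl (Sum.inr 4), Sum.inr 0, Sum.inr 1] with hg32
  set g21 : Fin 5 → (↥({a} : Set M) ⊕ Fin 3) ⊕ Fin 2 :=
    ![Sum.inl (Sum.inr 0), Sum.inl (Sum.inr 1), Sum.inl (Sum.inr 2), Sum.inr 0, Sum.inr 1]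
      with hg21
  set g10 : Fin 3 → (↥({a} : Set M) ⊕ Fin 1) ⊕ Fin 2 :=
    ![Sum.inl (Sum.inr 0), Sum.inr 0, Sum.inr 1] with hg10
  set quant : L.Formula (↥({a} : Set M) ⊕ Fin 1) :=
    iAllsF (Sum.elim (Sum.inl ∘ Sum.inl) g10)
      (iExsF (Sum.elim (Sum.inl ∘ Sum.inl) g21)
        (iAllsF (Sum.elim (Sum.inl ∘ Sum.inl) g32) Big)) with hquant
  have hquantr : ∀ x : M, quant.Realize (pval ![x]) ↔
      ∀ i : Fin 2 → M, ∃ j : Fin 2 → M, ∀ k : Fin 2 → M,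
        Big.Realize (pval ![x, i 0, i 1, j 0, j 1, k 0, k 1]) := by
    intro x
    rw [hquant, realize_iAllsF]
    apply forall_congr'
    intro i
    rw [pval_chain ![x] i g10]
    have e1 : (fun j => Sum.elim (pval ![x]) i (g10 j)) = ![x, i 0, i 1] := by
      funext j; fin_cases j <;> rfl
    rw [e1, realize_iExsF]
    apply exists_congr
    intro j
    rw [pval_chain ![x, i 0, i 1] j g21]
    have e2 : (fun m => Sum.elim (pval ![x, i 0, i 1]) j (g21 m))
        = ![x, i 0, i 1, j 0, j 1] := by
      funext m; fin_cases m <;> rfl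
    rw [e2, realize_iAllsF]
    apply forall_congr'
    intro k
    rw [pval_chain ![x, i 0, i 1, j 0, j 1] k g32]
    have e3 : (fun m => Sum.elim (pval ![x, i 0, i 1, j 0, j 1]) k (g32 m))
        = ![x, i 0, i 1, j 0, j 1, k 0, k 1] := by
      funext m; fin_cases m <;> rfl
    rw [e3]
  set pa1 : ↥({a} : Set M) ⊕ Fin 1 := Sum.inl ⟨a, haA⟩ with hpa1
  set δ₀ : L.Formula (↥({a} : Set M) ⊕ Fin 1) :=
    ((sub1 δs (Sum.inr 0)) ⊓ ((eqF pa1 (Sum.inr 0)) ⊔ (sub2 φp pa1 (Sum.inr 0)))) ⊓ quant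
    with hδ₀def
  set lt₀ : L.Formula (↥({a} : Set M) ⊕ Fin 2) := sub2 φp (Sum.inr 0) (Sum.inr 1) with hlt₀def
  -- the defined set is exactly InD
  have hdefeq : ∀ x : M, x ∈ defSet ({a} : Set M) δ₀ ↔ InD x := by
    intro x
    have : x ∈ defSet ({a} : Set M) δ₀ ↔ δ₀.Realize (pval ![x]) := Iff.rfl
    rw [this, hδ₀def, Formula.realize_inf, Formula.realize_inf, Formula.realize_sup,
      realize_sub1, realize_sub2, realize_eqF, hquantr x]
    constructor
    · rintro ⟨⟨h1, h2⟩, h3⟩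
      refine ⟨h1, h2, ?_, ?_⟩
      · intro u hu hau hux
        obtain ⟨j, hj⟩ := h3 ![u, u]
        have key := (hBig x u u (j 0) (j 1) (c 0) (c 0)).1 (hj ![c 0, c 0])
        have h4 := key.1 ⟨⟨hu, hau⟩, hux⟩
        refine ⟨j 0, h4.1.1, h4.1.2, ?_⟩
        intro z hz hlz
        have key2 := (hBig x u u (j 0) (j 1) z z).1 (hj ![z, z])
        exact (key2.1 ⟨⟨hu, hau⟩, hux⟩).2 ⟨hz, hlz⟩
      · intro v hv hav hvx
        obtain ⟨j, hj⟩ := h3 ![v, v]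
        have key := (hBig x v v (j 0) (j 1) (c 0) (c 0)).1 (hj ![c 0, c 0])
        have h4 := key.2 ⟨⟨hv, hav⟩, hvx⟩
        refine ⟨j 1, h4.1.1, h4.1.2, ?_⟩
        intro z hz hlz
        have key2 := (hBig x v v (j 0) (j 1) z z).1 (hj ![z, z])
        exact (key2.2 ⟨⟨hv, hav⟩, hvx⟩).2 ⟨hz, hlz⟩
    · rintro ⟨h1, h2, h3, h4⟩
      refine ⟨⟨h1, h2⟩, ?_⟩
      intro i
      by_cases hC1 : (Dm (i 0) ∧ (a = i 0 ∨ lt a (i 0))) ∧ lt (i 0) x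
      · obtain ⟨w, hw1, hw2, hw3⟩ := h3 (i 0) hC1.1.1 hC1.1.2 hC1.2
        by_cases hC2 : (Dm (i 1) ∧ lt a (i 1)) ∧ (i 1 = x ∨ lt (i 1) x)
        · obtain ⟨w', hw'1, hw'2, hw'3⟩ := h4 (i 1) hC2.1.1 hC2.1.2 hC2.2
          refine ⟨![w, w'], fun k => (hBig x (i 0) (i 1) w w' (k 0) (k 1)).2 ?_⟩
          exact ⟨fun _ => ⟨⟨hw1, hw2⟩, fun hz => hw3 (k 0) hz.1 hz.2⟩,
            fun _ => ⟨⟨hw'1, hw'2⟩, fun hz => hw'3 (k 1) hz.1 hz.2⟩⟩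
        · refine ⟨![w, a], fun k => (hBig x (i 0) (i 1) w a (k 0) (k 1)).2 ?_⟩
          exact ⟨fun _ => ⟨⟨hw1, hw2⟩, fun hz => hw3 (k 0) hz.1 hz.2⟩,
            fun hc => absurd hc hC2⟩
      · by_cases hC2 : (Dm (i 1) ∧ lt a (i 1)) ∧ (i 1 = x ∨ lt (i 1) x)
        · obtain ⟨w', hw'1, hw'2, hw'3⟩ := h4 (i 1) hC2.1.1 hC2.1.2 hC2.2
          refine ⟨![a, w'], fun k => (hBig x (i 0) (i 1) a w' (k 0) (k 1)).2 ?_⟩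
          exact ⟨fun hc => absurd hc hC1,
            fun _ => ⟨⟨hw'1, hw'2⟩, fun hz => hw'3 (k 1) hz.1 hz.2⟩⟩
        · refine ⟨![a, a], fun k => (hBig x (i 0) (i 1) a a (k 0) (k 1)).2 ?_⟩
          exact ⟨fun hc => absurd hc hC1, fun hc => absurd hc hC2⟩
  have hgrel : ∀ x y : M, gRel ({a} : Set M) δ₀ lt₀ x y ↔ (InD x ∧ InD y ∧ lt x y) := by
    intro x y
    constructor
    · rintro ⟨h1, h2, h3⟩
      refine ⟨(hdefeq x).1 h1, (hdefeq y).1 h2, ?_⟩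
      have : lt₀.Realize (pval ![x, y]) := h3
      rw [hlt₀def, realize_sub2] at this
      exact this
    · rintro ⟨h1, h2, h3⟩
      refine ⟨(hdefeq x).2 h1, (hdefeq y).2 h2, ?_⟩
      show lt₀.Realize (pval ![x, y])
      rw [hlt₀def, realize_sub2]
      exact h3
  -- assemble the goal
  refine ⟨δ₀, lt₀, ?_, ?_, ?_, ?_, ?_⟩
  · -- infinite
    exact Set.infinite_of_injective_forall_mem hcinj
      (fun n => (hdefeq (c n)).2 (hcd n))
  · -- linear
    refine ⟨?_, ?_, ?_⟩
    · intro x hx hxx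
      exact Dirr x (hInDm x ((hdefeq x).1 hx)) ((hgrel x x).1 hxx).2.2
    · intro x hx y hy z hz hxy hyz
      have hxD := (hdefeq x).1 hx
      have hyD := (hdefeq y).1 hy
      have hzD := (hdefeq z).1 hz
      exact (hgrel x z).2 ⟨hxD, hzD, Dtr x y z hxD.1 hyD.1 hzD.1
        ((hgrel x y).1 hxy).2.2 ((hgrel y z).1 hyz).2.2⟩
    · intro x hx y hy
      have hxD := (hdefeq x).1 hx
      have hyD := (hdefeq y).1 hy
      rcases Dtot x y hxD.1 hyD.1 with h | h | h
      · exact Or.inl h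
      · exact Or.inr (Or.inl ((hgrel x y).2 ⟨hxD, hyD, h⟩))
      · exact Or.inr (Or.inr ((hgrel y x).2 ⟨hyD, hxD, h⟩))
  · -- discrete
    constructor
    · rintro x hx ⟨b, hb, hr⟩
      have hxD := (hdefeq x).1 hx
      have hbD := (hdefeq b).1 hb
      obtain ⟨w, hwD, hxw, hwmin⟩ := hsuccInD x b hxD hbD ((hgrel x b).1 hr).2.2
      refine ⟨w, (hdefeq w).2 hwD, (hgrel x w).2 ⟨hxD, hwD, hxw⟩, ?_⟩
      intro c' hc' hrc'
      rcases hwmin c' ((hdefeq c').1 hc') ((hgrel x c').1 hrc').2.2 with h | h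
      · exact Or.inl h
      · exact Or.inr ((hgrel w c').2 ⟨hwD, (hdefeq c').1 hc', h⟩)
    · rintro x hx ⟨b, hb, hr⟩
      have hxD := (hdefeq x).1 hx
      have hbD := (hdefeq b).1 hb
      obtain ⟨w, hwD, hwx, hwmax⟩ := hpredInD x b hxD hbD ((hgrel b x).1 hr).2.2
      refine ⟨w, (hdefeq w).2 hwD, (hgrel w x).2 ⟨hwD, hxD, hwx⟩, ?_⟩
      intro c' hc' hrc'
      rcases hwmax c' ((hdefeq c').1 hc') ((hgrel c' x).1 hrc').2.2 with h | h
      · exact Or.inl h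
      · exact Or.inr ((hgrel c' w).2 ⟨(hdefeq c').1 hc', hwD, h⟩)
  · -- initial part
    constructor
    · rintro x ⟨n, hn⟩
      have : x = c n := hn.symm
      rw [this]
      exact (hdefeq (c n)).2 (hcd n)
    · rintro x ⟨n, hn⟩ d hd hr
      have hxc : x = c n := hn.symm
      have hdD := (hdefeq d).1 hd
      have hlt : lt d (c n) := by
        have := ((hgrel d x).1 hr).2.2
        rwa [hxc] at this
      obtain ⟨k, _, hk⟩ := hbelow n d hdD.1 hdD.2.1 hlt
      exact ⟨k, hk.symm⟩
  · -- the sequence is increasing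
    intro m n hmn
    exact (hgrel (c m) (c n)).2 ⟨hcd m, hcd n, hltc m n hmn⟩


end PaperDef
end

section
/- Let T be a complete first-order theory with infinite models in a countable language L, let M₀ be a countably infinite model of T, let a ∈ M₀, and let T(a) be the complete theory of the structure (M₀, a) in the language L expanded by one new constant symbol naming a. Then I(ℵ₀, T) · ℵ₀ ≥ I(ℵ₀, T(a)); in particular, if T(a) has 2^ℵ₀ countably infinite models up to isomorphism, then so does T. -/
open FirstOrder FirstOrder.Language Set Cardinal

universe u v w

namespace PaperDef

variable {L : FirstOrder.Language.{u, v}}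

variable {M : Type w} [L.Structure M]

section Statement19Aux

open FirstOrder.Language.Structure

variable {L' : FirstOrder.Language.{u', v'}}

/-- The interpretation of the new constant. -/
noncomputable def theConst (M : Type w) [(L[[Unit]]).Structure M] : M :=
  @funMap (L[[Unit]]) M _ 0 (Sum.inr () : (L[[Unit]]).Functions 0) default

/-- Lift an `L`-equivalence preserving the constant to an `L[[Unit]]`-equivalence. -/
lemma lift_nonempty {M N : Type w} [(L[[Unit]]).Structure M] [(L[[Unit]]).Structure N]
    (h : letI := (L.lhomWithConstants Unit).reduct M
         letI := (L.lhomWithConstants Unit).reduct N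
         ∃ g : M ≃[L] N, g (theConst (L := L) M) = theConst (L := L) N) :
    Nonempty (M ≃[L[[Unit]]] N) := by
  letI := (L.lhomWithConstants Unit).reduct M
  letI := (L.lhomWithConstants Unit).reduct N
  obtain ⟨g, hg⟩ := h
  refine ⟨{ toEquiv := g.toEquiv, map_fun' := ?_, map_rel' := ?_ }⟩
  · rintro n (f | f) x
    · exact g.map_fun' f x
    · match n, f with
      | 0, f =>
        cases f
        have hx : x = (default : Fin 0 → M) := Subsingleton.elim _ _
        subst hx
        have hx' : (g.toFun ∘ (default : Fin 0 → M) : Fin 0 → N) = default :=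
          Subsingleton.elim _ _
        rw [hx']
        exact hg
  · rintro n (r | r) x
    · exact g.map_rel' r x
    · exact r.elim

lemma countable_functions_of_card_le (hL : L.card ≤ ℵ₀) (n : ℕ) : Countable (L.Functions n) := by
  haveI h : Countable L.Symbols := mk_le_aleph0_iff.1 hL
  haveI h2 : Countable (Σ l, L.Functions l) := Language.Countable.countable_functions
  exact (sigma_mk_injective (i := n)).countable

lemma countable_relations_of_card_le (hL : L.card ≤ ℵ₀) (n : ℕ) : Countable (L.Relations n) := by
  haveI h : Countable L.Symbols := mk_le_aleph0_iff.1 hL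
  haveI h2 : Countable (Σ l, L.Relations l) :=
    (Sum.inr_injective (α := Σ l, L.Functions l)).countable
  exact (sigma_mk_injective (i := n)).countable

lemma pi_bound19 {α : ℕ → Type u} [h : ∀ n, Countable (α n)] (X : ℕ → Type)
    (hX : ∀ n, #(X n) ≤ 2 ^ ℵ₀) :
    #(∀ n, α n → X n) ≤ (2 : Cardinal.{u}) ^ ℵ₀ := by
  rw [mk_pi]
  have h1 : (Cardinal.prod fun n => #(α n → X n)) ≤
      Cardinal.prod (fun _ : ℕ => ((2 : Cardinal.{u}) ^ ℵ₀)) := by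
    apply prod_le_prod
    intro n
    rw [mk_arrow]
    have hb : Cardinal.lift.{u} #(X n) ≤ 2 ^ ℵ₀ := by
      have := lift_le.{u}.2 (hX n)
      simpa using this
    have he : Cardinal.lift.{0} #(α n) ≤ ℵ₀ := by
      simpa using mk_le_aleph0 (α := α n)
    calc Cardinal.lift.{u} #(X n) ^ Cardinal.lift.{0} #(α n)
        ≤ (2 ^ ℵ₀) ^ Cardinal.lift.{0} #(α n) := power_le_power_right hb
      _ ≤ (2 ^ ℵ₀) ^ (ℵ₀ : Cardinal.{u}) :=
          power_le_power_left (power_pos _ (by norm_num)).ne' he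
      _ = 2 ^ ℵ₀ := by rw [← power_mul, aleph0_mul_aleph0]
  refine h1.trans ?_
  rw [prod_const]
  simp only [lift_id', mk_denumerable, lift_aleph0]
  rw [← power_mul, aleph0_mul_aleph0]

lemma mk_structure_nat_le (hL : L.card ≤ ℵ₀) :
    #(L.Structure ℕ) ≤ (2 : Cardinal.{max u v}) ^ ℵ₀ := by
  haveI := countable_functions_of_card_le hL
  haveI := countable_relations_of_card_le hL
  have hF : #(∀ n, L.Functions n → (Fin n → ℕ) → ℕ) ≤ (2 : Cardinal.{u}) ^ ℵ₀ := by
    apply pi_bound19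
    intro n
    rw [mk_arrow]
    simp only [lift_id, mk_nat]
    calc (ℵ₀ : Cardinal.{0}) ^ #(Fin n → ℕ) ≤ ℵ₀ ^ (ℵ₀ : Cardinal.{0}) :=
          power_le_power_left aleph0_ne_zero mk_le_aleph0
      _ = 2 ^ ℵ₀ := power_self_eq le_rfl
  have hR : #(∀ n, L.Relations n → (Fin n → ℕ) → Prop) ≤ (2 : Cardinal.{v}) ^ ℵ₀ := by
    apply pi_bound19
    intro n
    rw [mk_arrow]
    simp only [lift_id, mk_Prop]
    exact power_le_power_left two_ne_zero mk_le_aleph0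
  have hinj : Function.Injective (fun S : L.Structure ℕ =>
      ((fun n (f : L.Functions n) x => @funMap L ℕ S n f x,
        fun n (r : L.Relations n) x => @RelMap L ℕ S n r x) :
        (∀ n, L.Functions n → (Fin n → ℕ) → ℕ) ×
        (∀ n, L.Relations n → (Fin n → ℕ) → Prop))) := by
    rintro ⟨f₁, r₁⟩ ⟨f₂, r₂⟩ h
    simp only [Prod.mk.injEq] at h
    obtain ⟨h1, h2⟩ := h
    congr
  refine (mk_le_of_injective hinj).trans ?_
  rw [mk_prod]
  have := mul_le_max (Cardinal.lift.{v} #(∀ n, L.Functions n → (Fin n → ℕ) → ℕ))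
    (Cardinal.lift.{u} #(∀ n, L.Relations n → (Fin n → ℕ) → Prop))
  refine this.trans ?_
  have hF' : Cardinal.lift.{v} #(∀ n, L.Functions n → (Fin n → ℕ) → ℕ) ≤
      (2 : Cardinal.{max u v}) ^ ℵ₀ := by
    have := lift_le.{v}.2 hF; simpa using this
  have hR' : Cardinal.lift.{u} #(∀ n, L.Relations n → (Fin n → ℕ) → Prop) ≤
      (2 : Cardinal.{max u v}) ^ ℵ₀ := by
    have := lift_le.{u}.2 hR; simpa using this
  simp only [max_le_iff]
  exact ⟨⟨hF', hR'⟩, (cantor ℵ₀).le⟩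

/-- A denumeration of the underlying set of a representative countable model. -/
noncomputable def eqvN (T : L.Theory) (q : Quotient (countableModelSetoid T)) :
    q.out.1.Carrier ≃ ℕ :=
  haveI : Countable q.out.1.Carrier := q.out.2.1
  haveI : Infinite q.out.1.Carrier := q.out.2.2
  letI := (nonempty_denumerable q.out.1.Carrier).some
  Denumerable.eqv _

/-- The structure on `ℕ` induced by a representative countable model. -/
noncomputable def strOf (T : L.Theory) (q : Quotient (countableModelSetoid T)) :
    L.Structure ℕ :=
  @_root_.Equiv.inducedStructure L _ ℕ _ (eqvN T q)

lemma strOf_injective (T : L.Theory) : Function.Injective (strOf T) := by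
  intro x y h
  have e₁ : @Language.Equiv L _ ℕ _ (strOf T x) :=
    @_root_.Equiv.inducedStructureEquiv L _ ℕ _ (eqvN T x)
  have e₂ : @Language.Equiv L _ ℕ _ (strOf T y) :=
    @_root_.Equiv.inducedStructureEquiv L _ ℕ _ (eqvN T y)
  have e₁' : @Language.Equiv L _ ℕ _ (strOf T y) := h ▸ e₁
  rw [← Quotient.out_equiv_out]
  letI : L.Structure ℕ := strOf T y
  exact ⟨e₂.symm.comp e₁'⟩

lemma numCountableModels_le_continuum (hL : L.card ≤ ℵ₀) (T : L.Theory) :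
    numCountableModels T ≤ 2 ^ ℵ₀ := by
  have hinj : Function.Injective
      (fun q : Quotient (countableModelSetoid T) =>
        (ULift.up (strOf T q) : ULift.{max u v 1} (L.Structure ℕ))) := by
    intro x y h
    exact strOf_injective T (congrArg ULift.down h)
  refine (mk_le_of_injective hinj).trans ?_
  rw [mk_uLift]
  have h2 := lift_le.{max u v 1}.2 (mk_structure_nat_le hL)
  refine h2.trans ?_
  rw [lift_power, lift_aleph0, lift_two]

lemma reduct_model19 (T : L.Theory) {M₀ : Type*} [L.Structure M₀]
    [(constantsOn Unit).Structure M₀] (hMT : M₀ ⊨ T)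
    (N : Type*) [(L[[Unit]]).Structure N]
    (hN : N ⊨ (L[[Unit]]).completeTheory M₀) :
    @Theory.Model L N ((L.lhomWithConstants Unit).reduct N) T := by
  letI := (L.lhomWithConstants Unit).reduct N
  haveI := hMT
  haveI := hN
  rw [Theory.model_iff]
  intro φ hφ
  have h1 : M₀ ⊨ φ := Theory.realize_sentence_of_mem T hφ
  have h2 : M₀ ⊨ (L.lhomWithConstants Unit).onSentence φ :=
    (LHom.realize_onSentence (M := M₀) (L.lhomWithConstants Unit) φ).2 h1
  have h3 : N ⊨ (L.lhomWithConstants Unit).onSentence φ :=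
    Theory.realize_sentence_of_mem ((L[[Unit]]).completeTheory M₀)
      (mem_completeTheory.2 h2)
  have h4 := @LHom.realize_onSentence L (L[[Unit]]) N
    ((L.lhomWithConstants Unit).reduct N) _ (L.lhomWithConstants Unit)
    (LHom.isExpansionOn_reduct (L.lhomWithConstants Unit) N) φ
  exact h4.1 h3

/-- The reduct of a countable model of `T(a)` as a countable model of `T`. -/
noncomputable def redModel19 (T : L.Theory) {M₀ : Type*} [L.Structure M₀]
    [(constantsOn Unit).Structure M₀] (hMT : M₀ ⊨ T)
    (N : {N : Theory.ModelType.{u, v, 0} ((L[[Unit]]).completeTheory M₀) //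
      Countable N ∧ Infinite N}) :
    {N : Theory.ModelType.{u, v, 0} T // Countable N ∧ Infinite N} :=
  letI := (L.lhomWithConstants Unit).reduct N.1.Carrier
  haveI : N.1.Carrier ⊨ T := reduct_model19 T hMT N.1.Carrier N.1.is_model
  ⟨@Theory.ModelType.of L T N.1.Carrier _ _ N.1.nonempty', N.2⟩

lemma main19 (hL : L.card ≤ ℵ₀) (T : L.Theory)
    (M₀ : Type) [L.Structure M₀] [(constantsOn Unit).Structure M₀] (hMT : M₀ ⊨ T) :
    numCountableModels ((L[[Unit]]).completeTheory M₀) ≤ numCountableModels T * ℵ₀ := by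
  classical
  let Q' := Quotient (countableModelSetoid ((L[[Unit]]).completeTheory M₀))
  let Q := Quotient (countableModelSetoid T)
  let P : Q' → Q := fun x => ⟦redModel19 T hMT x.out⟧
  have hfib : ∀ q : Q, #{x : Q' // P x = q} ≤ ℵ₀ := by
    intro q
    have hex : ∀ x : {x : Q' // P x = q},
        Nonempty ((redModel19 T hMT x.1.out).1 ≃[L] q.out.1) := by
      intro x
      have h1 : (⟦redModel19 T hMT x.1.out⟧ : Q) = ⟦q.out⟧ := by
        rw [Quotient.out_eq q]
        exact x.2
      exact Quotient.exact h1
    haveI : Countable q.out.1.Carrier := q.out.2.1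
    obtain ⟨ι⟩ := nonempty_embedding_nat q.out.1.Carrier
    have hinj : Function.Injective (fun x : {x : Q' // P x = q} =>
        (ULift.up (ι ((hex x).some (theConst (L := L) x.1.out.1.Carrier))) :
          ULift.{max u v 1} ℕ)) := by
      intro x y h
      have h2 := ι.injective (congrArg ULift.down h)
      have hg : ((hex y).some.symm.comp (hex x).some)
            (theConst (L := L) x.1.out.1.Carrier) =
          theConst (L := L) y.1.out.1.Carrier := by
        exact (congrArg (hex y).some.symm h2).trans ((hex y).some.symm_apply_apply _)
      have hne : Nonempty (x.1.out.1.Carrier ≃[L[[Unit]]] y.1.out.1.Carrier) := by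
        apply lift_nonempty
        letI := (L.lhomWithConstants Unit).reduct x.1.out.1.Carrier
        letI := (L.lhomWithConstants Unit).reduct y.1.out.1.Carrier
        exact ⟨(hex y).some.symm.comp (hex x).some, hg⟩
      exact Subtype.ext (Quotient.out_equiv_out.1 hne)
    refine (mk_le_of_injective hinj).trans ?_
    exact (Cardinal.mk_eq_aleph0 (ULift.{max u v 1} ℕ)).le
  have hQ' : #Q' = Cardinal.sum (fun q : Q => #{x : Q' // P x = q}) := by
    rw [← mk_sigma]
    exact (mk_congr (Equiv.sigmaFiberEquiv P)).symm
  show #Q' ≤ #Q * ℵ₀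
  rw [hQ', ← sum_const']
  exact sum_le_sum _ _ hfib


end Statement19Aux

/-- Naming a constant `a` in a countable model `M₀ ⊨ T` yields a
theory `T(a)` with `I(ℵ₀, T) · ℵ₀ ≥ I(ℵ₀, T(a))`; in particular if `T(a)` has
`2 ^ ℵ₀` countable models then so does `T`. -/
theorem statement19 (L : FirstOrder.Language.{u, v}) (hL : L.card ≤ ℵ₀)
    (T : L.Theory) (hT : T.IsComplete)
    (M₀ : Type) [L.Structure M₀] (hMT : M₀ ⊨ T)
    (hcnt : Countable M₀) (hinf : Infinite M₀) (a : M₀) :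
    letI : (constantsOn Unit).Structure M₀ := constantsOn.structure (fun _ => a)
    numCountableModels ((L[[Unit]]).completeTheory M₀) ≤ numCountableModels T * ℵ₀ ∧
    (numCountableModels ((L[[Unit]]).completeTheory M₀) = 2 ^ ℵ₀ →
      numCountableModels T = 2 ^ ℵ₀) := by
  letI : (constantsOn Unit).Structure M₀ := constantsOn.structure (fun _ => a)
  refine ⟨main19 hL T M₀ hMT, fun h => ?_⟩
  have h1 := main19 hL T M₀ hMT
  rw [h] at h1
  have h2 : (2 : Cardinal) ^ (ℵ₀ : Cardinal) ≤ max (max (numCountableModels T) ℵ₀) ℵ₀ :=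
    h1.trans (mul_le_max _ _)
  rw [max_assoc, max_self] at h2
  have h3 : (2 : Cardinal) ^ (ℵ₀ : Cardinal) ≤ numCountableModels T :=
    (le_max_iff.1 h2).resolve_right (not_le.2 (cantor ℵ₀))
  exact le_antisymm (numCountableModels_le_continuum hL T) h3

end PaperDef
end
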